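/- arXiv:2402.14613 — 10 statements merged into one kernel-verified Lean document; each statement's English description precedes it below -/
import Mathlib

section
/- Let m, n be positive integers. The only divisor r of lcm(m,n) satisfying lcm(r,m) = lcm(r,n) = lcm(m,n) is r = lcm(m,n) itself, if and only if ν_p(m) ≠ ν_p(n) for every prime p dividing m·n. -/
/-- The only divisor `r` of `lcm m n` with `lcm r m = lcm r n = lcm m n` is
`lcm m n` itself iff the `p`-adic valuations of `m` and `n` differ for every
prime `p` dividing `m * n`. -/
theorem stmt6 (m n : ℕ) (hm : 0 < m) (hn : 0 < n) :
    (∀ r : ℕ, r ∣ Nat.lcm m n → Nat.lcm r m = Nat.lcm m n → Nat.lcm r n = Nat.lcm m n →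
        r = Nat.lcm m n) ↔
      ∀ p : ℕ, p.Prime → p ∣ m * n → m.factorization p ≠ n.factorization p := by
  have hm0 : m ≠ 0 := hm.ne'
  have hn0 : n ≠ 0 := hn.ne'
  have hL0 : Nat.lcm m n ≠ 0 := Nat.lcm_ne_zero hm0 hn0
  have hLf : (Nat.lcm m n).factorization = m.factorization ⊔ n.factorization :=
    Nat.factorization_lcm hm0 hn0
  constructor
  · intro h p hp hpmn hkeq
    -- p divides both m and n
    have hpm : p ∣ m := by
      rcases (Nat.Prime.dvd_mul hp).mp hpmn with h1 | h1
      · exact h1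
      · have := (Nat.Prime.dvd_iff_one_le_factorization hp hm0).mpr
          (by rw [hkeq]; exact (Nat.Prime.factorization_pos_of_dvd hp hn0 h1))
        exact this
    have hν : 1 ≤ m.factorization p := (Nat.Prime.factorization_pos_of_dvd hp hm0 hpm)
    have hpL : p ∣ Nat.lcm m n := hpm.trans (Nat.dvd_lcm_left m n)
    set L := Nat.lcm m n with hLdef
    set r := L / p with hrdef
    have hr0 : r ≠ 0 := Nat.div_ne_zero_iff_of_dvd hpL |>.mpr ⟨hL0, hp.ne_zero⟩
    have hrdvd : r ∣ L := Nat.div_dvd_of_dvd hpL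
    have hrf : r.factorization = L.factorization - p.factorization :=
      Nat.factorization_div hpL
    have hLp : L.factorization p = m.factorization p := by
      rw [hLf, Finsupp.sup_apply, hkeq, sup_idem]
    have hrfq : ∀ q, q ≠ p → r.factorization q = L.factorization q := by
      intro q hq
      rw [hrf, Finsupp.tsub_apply, Nat.Prime.factorization hp,
        Finsupp.single_apply, if_neg (fun h => hq h.symm)]
      simp
    have hrfp : r.factorization p = m.factorization p - 1 := by
      rw [hrf, Finsupp.tsub_apply, Nat.Prime.factorization hp,
        Finsupp.single_apply, if_pos rfl, hLp]
    have hmL : m.factorization ≤ L.factorization := by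
      rw [hLf]; exact le_sup_left
    have hnL : n.factorization ≤ L.factorization := by
      rw [hLf]; exact le_sup_right
    have h1 : Nat.lcm r m = L := by
      refine Nat.eq_of_factorization_eq (Nat.lcm_ne_zero hr0 hm0) hL0 fun q => ?_
      rw [Nat.factorization_lcm hr0 hm0, Finsupp.sup_apply]
      by_cases hq : q = p
      · subst hq
        rw [hrfp, hLp]
        omega
      · rw [hrfq q hq]
        exact sup_eq_left.mpr (hmL q)
    have h2 : Nat.lcm r n = L := by
      refine Nat.eq_of_factorization_eq (Nat.lcm_ne_zero hr0 hn0) hL0 fun q => ?_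
      rw [Nat.factorization_lcm hr0 hn0, Finsupp.sup_apply]
      by_cases hq : q = p
      · subst hq
        rw [hrfp, hLp, ← hkeq]
        omega
      · rw [hrfq q hq]
        exact sup_eq_left.mpr (hnL q)
    have := h r hrdvd h1 h2
    have : r.factorization p = L.factorization p := by rw [this]
    rw [hrfp, hLp] at this
    omega
  · intro h r hrdvd h1 h2
    have hr0 : r ≠ 0 := fun h0 => by
      rw [h0, Nat.lcm_zero_left] at h1
      exact hL0 h1.symm
    refine Nat.eq_of_factorization_eq hr0 hL0 fun q => ?_
    have hle : r.factorization q ≤ (Nat.lcm m n).factorization q :=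
      (Nat.factorization_le_iff_dvd hr0 hL0).mpr hrdvd q
    by_cases hq : q.Prime
    · by_cases hqmn : q ∣ m * n
      · have hne := h q hq hqmn
        rcases Nat.lt_or_ge (m.factorization q) (n.factorization q) with hlt | hge
        · -- ν_q L = ν_q n > ν_q m; use h1 : lcm r m = L
          have := congrArg (fun x => x.factorization q) h1
          simp only [Nat.factorization_lcm hr0 hm0, hLf, Finsupp.sup_apply] at this
          have hLq : (Nat.lcm m n).factorization q = n.factorization q := by
            rw [hLf, Finsupp.sup_apply]; omega
          omega
        · have hgt : n.factorization q < m.factorization q := lt_of_le_of_ne hge (Ne.symm hne)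
          have := congrArg (fun x => x.factorization q) h2
          simp only [Nat.factorization_lcm hr0 hn0, hLf, Finsupp.sup_apply] at this
          have hLq : (Nat.lcm m n).factorization q = m.factorization q := by
            rw [hLf, Finsupp.sup_apply]; omega
          omega
      · have hqm : ¬ q ∣ m := fun hd => hqmn (hd.mul_right n)
        have hqn : ¬ q ∣ n := fun hd => hqmn (hd.mul_left m)
        have : (Nat.lcm m n).factorization q = 0 := by
          rw [hLf, Finsupp.sup_apply, Nat.factorization_eq_zero_of_not_dvd hqm,
            Nat.factorization_eq_zero_of_not_dvd hqn]
          simp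
        omega
    · rw [Nat.factorization_eq_zero_of_not_prime r hq,
        Nat.factorization_eq_zero_of_not_prime _ hq]
end

section
/- Let q be a prime power, m, n coprime positive integers. Let α generate 𝔽_{q^m} over 𝔽_q and β generate 𝔽_{q^n} over 𝔽_q, and let γ ∈ 𝔽_{q^{mn}}. If for every integer k: (γ = γ^{q^k} ∧ β = β^{q^k} implies α = α^{q^k}) and (γ = γ^{q^k} ∧ α = α^{q^k} implies β = β^{q^k}), then 𝔽_q(γ) = 𝔽_{q^{mn}}; that is, γ generates 𝔽_{q^{mn}} over 𝔽_q. -/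
/-!
The Frobenius `y ↦ y ^ q` restricted to `𝔽_q(x)` has order `[𝔽_q(x) : 𝔽_q] = deg x`, and it is
determined by its value at `x`; hence `x ^ q ^ k = x` exactly when `deg x ∣ k`. With
`d = deg γ`, conjugate cancellation at `k = d n` and `k = d m` turns `γ, β` (resp. `γ, α`)
being fixed into `m ∣ d n` and `n ∣ d m`, so coprimality gives `m n ∣ d`, while `d ∣ m n`
because `γ ∈ 𝔽_{q^{mn}}`.
-/

open IntermediateField in
theorem FiniteField.pow_card_pow_eq_self_iff {F L : Type*} [Field F] [Fintype F] [Field L]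
    [Algebra F L] {x : L} (hx : IsIntegral F x) (k : ℕ) :
    x ^ Fintype.card F ^ k = x ↔ (minpoly F x).natDegree ∣ k := by
  have : FiniteDimensional F F⟮x⟯ := adjoin.finiteDimensional hx
  have : Finite F⟮x⟯ := Module.finite_of_finite F
  have frobenius_pow_apply (y : F⟮x⟯) :
      (frobeniusAlgHom F F⟮x⟯ ^ k) y = y ^ Fintype.card F ^ k := by
    rw [AlgHom.coe_pow, coe_frobeniusAlgHom, pow_iterate]
  rw [← adjoin.finrank hx, ← orderOf_frobeniusAlgHom, orderOf_dvd_iff_pow_eq_one]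
  constructor
  · intro h
    refine adjoin_algHom_ext F fun y hy => ?_
    rw [Set.mem_singleton_iff] at hy
    subst hy
    rw [frobenius_pow_apply]
    exact Subtype.ext h
  · intro h
    simpa [frobenius_pow_apply] using
      congrArg Subtype.val (DFunLike.congr_fun h ⟨x, mem_adjoin_simple_self F x⟩)

theorem stmt7_general (F : Type*) [Field F] [Fintype F] (q : ℕ) (hq : q = Fintype.card F)
    (m n : ℕ) (hmn : Nat.Coprime m n)
    (α β γ : AlgebraicClosure F)
    (hα : (minpoly F α).natDegree = m) (hβ : (minpoly F β).natDegree = n)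
    (hγmem : γ ^ q ^ (m * n) = γ)
    (hcc : ∀ k : ℕ,
      ((γ = γ ^ q ^ k ∧ β = β ^ q ^ k) → α = α ^ q ^ k) ∧
      ((γ = γ ^ q ^ k ∧ α = α ^ q ^ k) → β = β ^ q ^ k)) :
    (minpoly F γ).natDegree = m * n := by
  subst hq
  have fixed_iff (x : AlgebraicClosure F) (k : ℕ) :=
    FiniteField.pow_card_pow_eq_self_iff (Algebra.IsIntegral.isIntegral (R := F) x) k
  set d := (minpoly F γ).natDegree
  have cancel (k : ℕ) : (d ∣ k ∧ n ∣ k → m ∣ k) ∧ (d ∣ k ∧ m ∣ k → n ∣ k) := by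
    simpa only [eq_comm (a := γ), eq_comm (a := α), eq_comm (a := β), fixed_iff, hα, hβ]
      using hcc k
  have hmd : m ∣ d := hmn.dvd_of_dvd_mul_right <|
    (cancel (d * n)).1 ⟨dvd_mul_right d n, dvd_mul_left n d⟩
  have hnd : n ∣ d := hmn.symm.dvd_of_dvd_mul_right <|
    (cancel (d * m)).2 ⟨dvd_mul_right d m, dvd_mul_left m d⟩
  exact Nat.dvd_antisymm ((fixed_iff γ _).mp hγmem) (hmn.mul_dvd_of_dvd_of_dvd hmd hnd)

/-- If `gcd(m,n) = 1`, `α` has degree `m`, `β` has degree `n` over `𝔽_q`, and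
`γ ∈ 𝔽_{q^{mn}}` satisfies conjugate cancellation with respect to `α` and `β`,
then `γ` generates `𝔽_{q^{mn}}` over `𝔽_q`. -/
theorem stmt7 (F : Type*) [Field F] [Fintype F] (q : ℕ) (hq : q = Fintype.card F)
    (m n : ℕ) (hm : 0 < m) (hn : 0 < n) (hmn : Nat.Coprime m n)
    (α β γ : AlgebraicClosure F)
    (hα : (minpoly F α).natDegree = m) (hβ : (minpoly F β).natDegree = n)
    (hγmem : γ ^ q ^ (m * n) = γ)
    (hcc : ∀ k : ℕ,
      ((γ = γ ^ q ^ k ∧ β = β ^ q ^ k) → α = α ^ q ^ k) ∧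
      ((γ = γ ^ q ^ k ∧ α = α ^ q ^ k) → β = β ^ q ^ k)) :
    (minpoly F γ).natDegree = m * n :=
  stmt7_general F q hq m n hmn α β γ hα hβ hγmem hcc
end

section
/- Let q be a prime power, m = d·k positive integers, and f ∈ 𝔽_q[X] monic of degree m. Then f is irreducible over 𝔽_q if and only if there exists a monic irreducible polynomial f₀ ∈ 𝔽_{q^k}[X] of degree d whose coefficients generate 𝔽_{q^k} over 𝔽_q, such that f = ∏_{μ=0}^{k-1} f₀^{(μ)}, where f₀^{(μ)} is obtained from f₀ by raising every coefficient to the power q^μ. -/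
/-!
The maps `x ↦ x ^ q ^ μ` for `μ < k` are exactly the elements of `Gal(E/F)`, so the product in
the statement is the product of the Galois conjugates of `f₀`.

If `f` is irreducible, `F(α) = F[X]/(f)` has degree `dk` over `F`, hence contains a copy of `E`.
Then `f₀ = minpoly E α` has degree `[F(α) : E] = d`; `F(α)` also has degree at most `d` over the
field generated by the coefficients of `f₀`, so that field is all of `E`; the product of the
conjugates of `f₀` is fixed by `Gal(E/F)`, so it is a monic polynomial over `F` of degree `dk`
vanishing at `α`, i.e. `f`. Conversely, if the coefficients of `f₀` generate `E`, its conjugates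
are pairwise distinct monic irreducibles, hence pairwise coprime. All of them divide the minimal
polynomial `g` over `F` of a root of `f₀`, so `deg f ≤ deg g`; since also `g ∣ f`, `f = g` is
irreducible.
-/

open Polynomial

section GaloisConjugates

variable {K L : Type*} [Field K] [Field L] [Algebra K L]

namespace Polynomial

theorem map_algEquiv_injective_of_adjoin_coeff_eq_top {f₀ : L[X]}
    (hgen : Algebra.adjoin K (Set.range f₀.coeff) = ⊤) :
    Function.Injective fun τ : L ≃ₐ[K] L => f₀.map (τ : L →+* L) := by
  intro τ₁ τ₂ h
  refine AlgEquiv.coe_toAlgHom_injective (AlgHom.ext_of_adjoin_eq_top hgen ?_)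
  rintro _ ⟨n, rfl⟩
  simpa using congrArg (coeff · n) h

theorem prod_map_algEquiv_mem_lifts [FiniteDimensional K L] [IsGalois K L] (g : L[X]) :
    ∏ τ : L ≃ₐ[K] L, g.map (τ : L →+* L) ∈ lifts (algebraMap K L) := by
  set P := ∏ τ : L ≃ₐ[K] L, g.map (τ : L →+* L)
  have hfix : ∀ σ : L ≃ₐ[K] L, P.map (σ : L →+* L) = P := fun σ => by
    simp only [P, Polynomial.map_prod, Polynomial.map_map]
    exact Fintype.prod_equiv (Equiv.mulLeft σ) _ _ fun _ => rfl
  refine (lifts_iff_coeff_lifts P).mpr fun n => ?_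
  refine (IsGalois.mem_range_algebraMap_iff_fixed _).mpr fun σ => ?_
  simpa using congrArg (coeff · n) (hfix σ)

theorem aeval_prod_map_algEquiv_eq_zero [Fintype (L ≃ₐ[K] L)] {A : Type*} [CommRing A]
    [Algebra L A] {g : L[X]} {a : A} (h : aeval a g = 0) :
    aeval a (∏ τ : L ≃ₐ[K] L, g.map (τ : L →+* L)) = 0 := by
  rw [map_prod]
  refine Finset.prod_eq_zero (Finset.mem_univ 1) ?_
  rwa [show ((1 : L ≃ₐ[K] L) : L →+* L) = RingHom.id L from rfl, Polynomial.map_id]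

theorem Monic.irreducible_of_map_eq_prod_map_algEquiv [Fintype (L ≃ₐ[K] L)] {f : K[X]}
    (hf : f.Monic) {f₀ : L[X]} (hf₀ : f₀.Monic) (hirr : Irreducible f₀)
    (hgen : Algebra.adjoin K (Set.range f₀.coeff) = ⊤)
    (hprod : f.map (algebraMap K L) = ∏ τ : L ≃ₐ[K] L, f₀.map (τ : L →+* L)) :
    Irreducible f := by
  have : Fact (Irreducible f₀) := ⟨hirr⟩
  set α := AdjoinRoot.root f₀
  have hminL : minpoly L α = f₀ := by
    rw [AdjoinRoot.minpoly_root hf₀.ne_zero, hf₀.leadingCoeff, inv_one, C_1, mul_one]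
  have hfα : aeval α f = 0 := by
    rw [← aeval_map_algebraMap L, hprod]
    exact aeval_prod_map_algEquiv_eq_zero (by rw [AdjoinRoot.aeval_eq, AdjoinRoot.mk_self])
  have hint : IsIntegral K α := ⟨f, hf, hfα⟩
  set g := minpoly K α
  have hconj_dvd : ∀ τ : L ≃ₐ[K] L, f₀.map (τ : L →+* L) ∣ g.map (algebraMap K L) := fun τ => by
    have := Polynomial.map_dvd (τ : L →+* L) (hminL ▸ minpoly.dvd_map_of_isScalarTower K L α)
    rwa [Polynomial.map_map, show (τ : L →+* L).comp (algebraMap K L) = algebraMap K L from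
      RingHom.ext τ.commutes] at this
  have hconj_coprime : Pairwise fun τ₁ τ₂ : L ≃ₐ[K] L =>
      IsCoprime (f₀.map (τ₁ : L →+* L)) (f₀.map (τ₂ : L →+* L)) := by
    intro τ₁ τ₂ hne
    refine ((MulEquiv.irreducible_iff (mapEquiv (τ₁ : L ≃+* L))).mpr hirr).coprime_iff_not_dvd.mpr
      fun hdvd => hne (map_algEquiv_injective_of_adjoin_coeff_eq_top hgen ?_)
    exact (eq_of_monic_of_dvd_of_natDegree_le (hf₀.map _) (hf₀.map _) hdvd
      (by rw [hf₀.natDegree_map, hf₀.natDegree_map])).symm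
  have hdeg : f.natDegree ≤ g.natDegree := by
    have := natDegree_le_of_dvd (hprod ▸ Fintype.prod_dvd_of_coprime hconj_coprime hconj_dvd)
      (Polynomial.map_ne_zero (minpoly.ne_zero hint))
    rwa [hf.natDegree_map, (minpoly.monic hint).natDegree_map] at this
  rw [eq_of_monic_of_dvd_of_natDegree_le (minpoly.monic hint) hf (minpoly.dvd K α hfα) hdeg]
  exact minpoly.irreducible hint

end Polynomial

namespace minpoly

variable {M : Type*} [Field M] [Algebra K M] [Algebra L M] [IsScalarTower K L M]

theorem map_eq_prod_map_algEquiv [FiniteDimensional K L] [IsGalois K L] {α : M}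
    (hα : IsIntegral K α)
    (hdeg : (minpoly K α).natDegree = Module.finrank K L * (minpoly L α).natDegree) :
    (minpoly K α).map (algebraMap K L) = ∏ τ : L ≃ₐ[K] L, (minpoly L α).map (τ : L →+* L) := by
  have hαL : IsIntegral L α := hα.tower_top
  have hP_monic : (∏ τ : L ≃ₐ[K] L, (minpoly L α).map (τ : L →+* L)).Monic :=
    monic_prod_of_monic _ _ fun τ _ => (minpoly.monic hαL).map _
  obtain ⟨g, hg_map, hg_deg, hg_monic⟩ :=
    lifts_and_natDegree_eq_and_monic (prod_map_algEquiv_mem_lifts (minpoly L α)) hP_monic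
  have hgα : Polynomial.aeval α g = 0 := by
    rw [← aeval_map_algebraMap L, hg_map]
    exact aeval_prod_map_algEquiv_eq_zero (minpoly.aeval L α)
  have hg_natDegree : g.natDegree = (minpoly K α).natDegree := by
    rw [hg_deg, natDegree_prod_of_monic _ _ fun τ _ => (minpoly.monic hαL).map _, hdeg]
    simp [(minpoly.monic hαL).natDegree_map, ← IsGalois.card_aut_eq_finrank]
  rw [← hg_map, eq_of_monic_of_dvd_of_natDegree_le (minpoly.monic hα) hg_monic
    (minpoly.dvd K α hgα) hg_natDegree.le]

theorem adjoin_coeff_eq_top_of_adjoin_eq_top [FiniteDimensional K M] {α : M}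
    (hprim : IntermediateField.adjoin K {α} = ⊤) :
    Algebra.adjoin K (Set.range (minpoly L α).coeff) = ⊤ := by
  have : FiniteDimensional K L := .left K L M
  have : FiniteDimensional L M := .right K L M
  set E₀ := IntermediateField.adjoin K (Set.range (minpoly L α).coeff)
  have hlift : minpoly L α ∈ lifts (algebraMap E₀ L) :=
    (lifts_iff_coeff_lifts _).mpr fun n =>
      ⟨⟨_, IntermediateField.subset_adjoin K _ ⟨n, rfl⟩⟩, rfl⟩
  obtain ⟨g, hg_map, hg_deg, hg_monic⟩ :=
    lifts_and_natDegree_eq_and_monic hlift (minpoly.monic (IsIntegral.of_finite L α))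
  have hgα : Polynomial.aeval α g = 0 := by rw [← aeval_map_algebraMap L, hg_map, minpoly.aeval]
  have : FiniteDimensional E₀ M := .right K E₀ M
  have hfinrank : Module.finrank E₀ M ≤ Module.finrank L M := by
    rw [← (Field.primitive_element_iff_minpoly_natDegree_eq E₀ α).mp
        (IntermediateField.adjoin_eq_top_of_adjoin_eq_top K hprim),
      ← (Field.primitive_element_iff_minpoly_natDegree_eq L α).mp
        (IntermediateField.adjoin_eq_top_of_adjoin_eq_top K hprim), ← hg_deg]
    exact natDegree_le_of_dvd (minpoly.dvd E₀ α hgα) hg_monic.ne_zero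
  have hE₀ : E₀ = ⊤ := by
    refine IntermediateField.eq_of_le_of_finrank_le le_top ?_
    have h := (Module.finrank_mul_finrank K E₀ M).trans (Module.finrank_mul_finrank K L M).symm
    rw [IntermediateField.finrank_top']
    exact le_of_mul_le_mul_right (h ▸ Nat.mul_le_mul_left _ hfinrank) Module.finrank_pos
  simpa [E₀, IntermediateField.adjoin_toSubalgebra_of_isAlgebraic
    fun x _ => Algebra.IsAlgebraic.isAlgebraic (R := K) x] using
    congrArg IntermediateField.toSubalgebra hE₀

end minpoly

end GaloisConjugates

namespace FiniteField

variable {F E : Type*} [Field F] [Fintype F] [Field E] [Algebra F E] [Finite E]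

theorem iterateFrobenius_mul_eq_frobeniusAlgEquivOfAlgebraic_pow {p e : ℕ} [ExpChar E p]
    (hcard : Fintype.card F = p ^ e) (μ : ℕ) :
    iterateFrobenius E p (e * μ) =
      ((frobeniusAlgEquivOfAlgebraic F E ^ μ : E ≃ₐ[F] E) : E →+* E) := by
  ext x
  change x ^ p ^ (e * μ) = (frobeniusAlgEquivOfAlgebraic F E ^ μ) x
  rw [AlgEquiv.coe_pow, coe_frobeniusAlgEquivOfAlgebraic_iterate, pow_mul, ← hcard]

theorem prod_range_finrank_frobeniusAlgEquivOfAlgebraic_pow {M : Type*} [CommMonoid M]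
    (φ : (E ≃ₐ[F] E) → M) :
    ∏ μ ∈ Finset.range (Module.finrank F E), φ (frobeniusAlgEquivOfAlgebraic F E ^ μ) =
      ∏ τ : E ≃ₐ[F] E, φ τ := by
  rw [← Fin.prod_univ_eq_prod_range]
  exact Fintype.prod_bijective _ (bijective_frobeniusAlgEquivOfAlgebraic_pow F E) _ _ fun _ => rfl

theorem _root_.Irreducible.exists_map_eq_prod_map_algEquiv {f : F[X]} (hirr : Irreducible f)
    (hf : f.Monic) {d : ℕ} (hdeg : f.natDegree = d * Module.finrank F E) :
    ∃ f₀ : E[X], f₀.Monic ∧ Irreducible f₀ ∧ f₀.natDegree = d ∧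
      Algebra.adjoin F (Set.range f₀.coeff) = ⊤ ∧
      f.map (algebraMap F E) = ∏ τ : E ≃ₐ[F] E, f₀.map (τ : E →+* E) := by
  have : Fact (Irreducible f) := ⟨hirr⟩
  set α := AdjoinRoot.root f
  have : Module.Finite F (AdjoinRoot f) := (AdjoinRoot.powerBasis hf.ne_zero).finite
  have : Finite (AdjoinRoot f) := Module.finite_of_finite F
  have hfinrank : Module.finrank F (AdjoinRoot f) = d * Module.finrank F E := by
    rw [(AdjoinRoot.powerBasis hf.ne_zero).finrank, AdjoinRoot.powerBasis_dim, hdeg]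
  obtain ⟨ι⟩ := nonempty_algHom_of_finrank_dvd (K := E) (L := AdjoinRoot f)
    (hfinrank ▸ dvd_mul_left _ _)
  let := ι.toRingHom.toAlgebra
  have : IsScalarTower F E (AdjoinRoot f) := .of_algebraMap_eq fun c => (ι.commutes c).symm
  have hprim := IntermediateField.adjoin_root_eq_top f
  have hfinrank_top : Module.finrank E (AdjoinRoot f) = d := by
    have h := Module.finrank_mul_finrank F E (AdjoinRoot f)
    rw [hfinrank, mul_comm d] at h
    exact Nat.eq_of_mul_eq_mul_left Module.finrank_pos h
  have hdeg₀ : (minpoly E α).natDegree = d :=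
    ((Field.primitive_element_iff_minpoly_natDegree_eq E α).mp
      (IntermediateField.adjoin_eq_top_of_adjoin_eq_top F hprim)).trans hfinrank_top
  have hminF : minpoly F α = f := by
    rw [AdjoinRoot.minpoly_root hf.ne_zero, hf.leadingCoeff, inv_one, C_1, mul_one]
  refine ⟨minpoly E α, minpoly.monic (.of_finite E α), minpoly.irreducible (.of_finite E α),
    hdeg₀, minpoly.adjoin_coeff_eq_top_of_adjoin_eq_top hprim, ?_⟩
  have h := minpoly.map_eq_prod_map_algEquiv (L := E) (.of_finite F α)
    (by rw [hminF, hdeg, hdeg₀, mul_comm])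
  rwa [hminF] at h

end FiniteField

theorem stmt8_general (p : ℕ) (F : Type*) [Field F] [Fintype F]
    (e : ℕ) (hcard : Fintype.card F = p ^ e)
    (E : Type*) [Field E] [Algebra F E] [ExpChar E p]
    (d k m : ℕ) (hk : 0 < k) (hm : m = d * k)
    (hE : Module.finrank F E = k)
    (f : Polynomial F) (hmonic : f.Monic) (hdeg : f.natDegree = m) :
    Irreducible f ↔
      ∃ f₀ : Polynomial E, f₀.Monic ∧ Irreducible f₀ ∧ f₀.natDegree = d ∧
        Algebra.adjoin F (Set.range f₀.coeff) = ⊤ ∧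
        f.map (algebraMap F E) =
          ∏ μ ∈ Finset.range k, f₀.map (iterateFrobenius E p (e * μ)) := by
  have : FiniteDimensional F E := Module.finite_of_finrank_pos (hE ▸ hk)
  have : Finite E := Module.finite_of_finite F
  have hconj (f₀ : E[X]) :
      ∏ μ ∈ Finset.range k, f₀.map (iterateFrobenius E p (e * μ)) =
        ∏ τ : E ≃ₐ[F] E, f₀.map (τ : E →+* E) := by
    simp only [FiniteField.iterateFrobenius_mul_eq_frobeniusAlgEquivOfAlgebraic_pow hcard, ← hE]
    exact FiniteField.prod_range_finrank_frobeniusAlgEquivOfAlgebraic_pow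
      fun τ : E ≃ₐ[F] E => f₀.map (τ : E →+* E)
  simp only [hconj]
  refine ⟨fun hirr => hirr.exists_map_eq_prod_map_algEquiv hmonic (by rw [hdeg, hm, hE]), ?_⟩
  rintro ⟨f₀, hf₀, hirr₀, -, hgen, hprod⟩
  exact hmonic.irreducible_of_map_eq_prod_map_algEquiv hf₀ hirr₀ hgen hprod

/-- A monic polynomial `f ∈ 𝔽_q[X]` of degree `m = d * k` is irreducible over `𝔽_q`
iff there is a monic irreducible `f₀ ∈ 𝔽_{q^k}[X]` of degree `d` whose coefficients
generate `𝔽_{q^k}` over `𝔽_q`, with `f = ∏_{μ=0}^{k-1} f₀^{(μ)}`, where `f₀^{(μ)}`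
raises every coefficient of `f₀` to the power `q^μ`. -/
theorem stmt8 (p : ℕ) [Fact p.Prime] (F : Type*) [Field F] [Fintype F] [CharP F p]
    (e : ℕ) (hcard : Fintype.card F = p ^ e)
    (E : Type*) [Field E] [Algebra F E] [ExpChar E p]
    (d k m : ℕ) (hd : 0 < d) (hk : 0 < k) (hm : m = d * k)
    (hE : Module.finrank F E = k)
    (f : Polynomial F) (hmonic : f.Monic) (hdeg : f.natDegree = m) :
    Irreducible f ↔
      ∃ f₀ : Polynomial E, f₀.Monic ∧ Irreducible f₀ ∧ f₀.natDegree = d ∧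
        Algebra.adjoin F (Set.range f₀.coeff) = ⊤ ∧
        f.map (algebraMap F E) =
          ∏ μ ∈ Finset.range k, f₀.map (iterateFrobenius E p (e * μ)) :=
  stmt8_general p F e hcard E d k m hk hm hE f hmonic hdeg
end

section
/- Let q be a prime power, m, n > 1 integers, β an element of degree n over 𝔽_q, α an element of degree m over 𝔽_q, and u₁,…,u_r ∈ 𝔽_q[X], v₁,…,v_r ∈ 𝔽_q[Y] polynomials such that the elements v₁(β),…,v_r(β) are linearly independent over 𝔽_{q^m}. Set φ(X,Y) = ∑_{s=1}^r u_s(X)v_s(Y). Then for any positive integer k: φ(α^{q^k}, β) = φ(α, β) if and only if u_s(α) ∈ 𝔽_{q^k} for every s = 1,…,r. -/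
open Polynomial

/-- Any element of the algebraic closure of a finite field `F` satisfies
`x ^ card F ^ d = x` where `d` is the degree of its minimal polynomial. -/
lemma aux_pow_card_pow_deg (F : Type*) [Field F] [Fintype F] (α : AlgebraicClosure F) :
    α ^ Fintype.card F ^ (minpoly F α).natDegree = α := by
  have hint : IsIntegral F α := Algebra.IsIntegral.isIntegral α
  set K := IntermediateField.adjoin F ({α} : Set (AlgebraicClosure F)) with hK
  haveI : FiniteDimensional F K := IntermediateField.adjoin.finiteDimensional hint
  haveI : Finite K := Module.finite_of_finite F
  haveI : Fintype K := Fintype.ofFinite K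
  have hcard : Fintype.card K = Fintype.card F ^ (minpoly F α).natDegree := by
    rw [Module.card_eq_pow_finrank (K := F) (V := K), IntermediateField.adjoin.finrank hint]
  have hx : (IntermediateField.AdjoinSimple.gen F α) ^ Fintype.card K
      = IntermediateField.AdjoinSimple.gen F α := FiniteField.pow_card _
  have := congrArg (fun y : K => (y : AlgebraicClosure F)) hx
  simpa [hcard, IntermediateField.AdjoinSimple.coe_gen] using this

/-- `aeval` commutes with the `q^j`-power Frobenius on the algebraic closure. -/
lemma aux_aeval_pow (F : Type*) [Field F] [Fintype F] (j : ℕ) (x : AlgebraicClosure F)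
    (P : Polynomial F) :
    aeval (x ^ Fintype.card F ^ j) P = (aeval x P) ^ Fintype.card F ^ j := by
  set p := ringChar F with hpdef
  haveI : CharP F p := ringChar.charP F
  obtain ⟨t, hp, ht⟩ := FiniteField.card F p
  haveI : Fact p.Prime := ⟨hp⟩
  haveI : CharP (AlgebraicClosure F) p :=
    charP_of_injective_algebraMap (algebraMap F (AlgebraicClosure F)).injective p
  have hqj : Fintype.card F ^ j = p ^ ((t : ℕ) * j) := by rw [ht, ← pow_mul]
  set f : AlgebraicClosure F →+* AlgebraicClosure F :=
    iterateFrobenius (AlgebraicClosure F) p ((t : ℕ) * j) with hf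
  have hfx : ∀ y : AlgebraicClosure F, f y = y ^ Fintype.card F ^ j := by
    intro y; rw [hf, iterateFrobenius_def, hqj]
  have hcomp : f.comp (algebraMap F (AlgebraicClosure F)) = algebraMap F (AlgebraicClosure F) := by
    ext a
    simp only [RingHom.comp_apply, hfx]
    rw [← map_pow]
    congr 1
    have : ∀ i : ℕ, a ^ Fintype.card F ^ i = a := by
      intro i
      induction i with
      | zero => simp
      | succ i ih => rw [pow_succ, pow_mul, ih, FiniteField.pow_card]
    exact this j
  calc aeval (x ^ Fintype.card F ^ j) P = eval₂ (algebraMap F (AlgebraicClosure F)) (f x) P := by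
        rw [aeval_def, hfx]
    _ = f (aeval x P) := by rw [aeval_def, hom_eval₂, hcomp]
    _ = (aeval x P) ^ Fintype.card F ^ j := hfx _

/-- Lemma 3.1: if `v₁(β),…,v_r(β)` are linearly independent over `𝔽_{q^m}`, then
`φ(α^{q^k}, β) = φ(α, β)` iff `u_s(α) ∈ 𝔽_{q^k}` for every `s`, where
`φ(X,Y) = ∑_s u_s(X) v_s(Y)`. -/
theorem stmt9 (F : Type*) [Field F] [Fintype F] (q : ℕ) (hq : q = Fintype.card F)
    (m n : ℕ) (hm : 1 < m) (hn : 1 < n) (r : ℕ)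
    (α β : AlgebraicClosure F)
    (hα : (minpoly F α).natDegree = m) (hβ : (minpoly F β).natDegree = n)
    (u : Fin r → Polynomial F) (v : Fin r → Polynomial F)
    -- `v₁(β),…,v_r(β)` are linearly independent over `𝔽_{q^m}`:
    (hv : ∀ c : Fin r → AlgebraicClosure F, (∀ s, c s ^ q ^ m = c s) →
      ∑ s, c s * aeval β (v s) = 0 → ∀ s, c s = 0) :
    ∀ k : ℕ, 0 < k →
      ((∑ s, aeval (α ^ q ^ k) (u s) * aeval β (v s)
          = ∑ s, aeval α (u s) * aeval β (v s)) ↔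
        ∀ s, (aeval α (u s)) ^ q ^ k = aeval α (u s)) := by
  subst hq
  intro k hk
  -- key : aeval (α ^ q ^ k) (u s) = (aeval α (u s)) ^ q ^ k
  have key : ∀ s, aeval (α ^ Fintype.card F ^ k) (u s) = (aeval α (u s)) ^ Fintype.card F ^ k :=
    fun s => aux_aeval_pow F k α (u s)
  -- u_s(α) is fixed by the q^m Frobenius
  have hαm : α ^ Fintype.card F ^ m = α := by rw [← hα]; exact aux_pow_card_pow_deg F α
  have hum : ∀ s, (aeval α (u s)) ^ Fintype.card F ^ m = aeval α (u s) := by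
    intro s
    rw [← aux_aeval_pow F m α (u s), hαm]
  constructor
  · intro h s
    have hsum : ∑ s, ((aeval α (u s)) ^ Fintype.card F ^ k - aeval α (u s)) * aeval β (v s) = 0 := by
      have := sub_eq_zero_of_eq h
      rw [← Finset.sum_sub_distrib] at this
      simpa [key, sub_mul] using this
    have := hv (fun s => (aeval α (u s)) ^ Fintype.card F ^ k - aeval α (u s)) ?_ hsum s
    · exact sub_eq_zero.mp this
    · intro s
      have hch : ∀ a b : AlgebraicClosure F, (a - b) ^ Fintype.card F ^ m
          = a ^ Fintype.card F ^ m - b ^ Fintype.card F ^ m := by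
        intro a b
        set p := ringChar F with hpdef
        haveI : CharP F p := ringChar.charP F
        obtain ⟨t, hp, ht⟩ := FiniteField.card F p
        haveI : Fact p.Prime := ⟨hp⟩
        haveI : CharP (AlgebraicClosure F) p :=
          charP_of_injective_algebraMap (algebraMap F (AlgebraicClosure F)).injective p
        rw [ht, ← pow_mul, sub_pow_char_pow]
      show ((aeval α (u s)) ^ Fintype.card F ^ k - aeval α (u s)) ^ Fintype.card F ^ m = _
      rw [hch]
      have h1 : ((aeval α (u s)) ^ Fintype.card F ^ k) ^ Fintype.card F ^ m
          = (aeval α (u s)) ^ Fintype.card F ^ k := by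
        rw [← pow_mul, mul_comm, pow_mul, hum s]
      rw [h1, hum s]
  · intro h
    refine Finset.sum_congr rfl fun s _ => ?_
    rw [key s, h s]
end

section
/- Let q be a prime power, m, n > 1 integers, α of degree m over 𝔽_q, β of degree n over 𝔽_q, and φ(X,Y) = ∑_{s=1}^r u_s(X)v_s(Y) with u_s ∈ 𝔽_q[X], v_s ∈ 𝔽_q[Y], such that v₁(β),…,v_r(β) are linearly independent over 𝔽_{q^m}. Then the implication (φ(α,β) = φ(α^{q^k},β) ⟹ α = α^{q^k}) holds for every integer k if and only if 𝔽_q(u₁(α), u₂(α), …, u_r(α)) = 𝔽_{q^m}. -/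
open Polynomial

-- aux1: every element of a finite-dimensional subalgebra S of a field K over finite field F
-- satisfies x ^ (card F ^ finrank F S) = x
theorem aux1 {F K : Type*} [Field F] [Fintype F] [Field K] [Algebra F K]
    (S : Subalgebra F K) [Module.Finite F S] :
    ∀ x ∈ S, x ^ Fintype.card F ^ Module.finrank F S = x := by
  classical
  haveI : Finite S := Module.finite_of_finite F
  haveI : Fintype S := Fintype.ofFinite S
  letI : Field S := Fintype.fieldOfDomain S
  have hcard : Fintype.card S = Fintype.card F ^ Module.finrank F S := Module.card_eq_pow_finrank
  intro x hx
  have h := FiniteField.pow_card (⟨x, hx⟩ : S)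
  rw [hcard] at h
  have := congrArg (Subtype.val) h
  push_cast at this
  simpa using this

theorem aux2 {F K : Type*} [Field F] [Fintype F] [Field K] [Algebra F K]
    (S : Subalgebra F K) [Module.Finite F S] (d : ℕ) (hd : 0 < d)
    (h : ∀ x ∈ S, x ^ Fintype.card F ^ d = x) :
    Module.finrank F S ≤ d := by
  classical
  haveI : Finite S := Module.finite_of_finite F
  haveI : Fintype S := Fintype.ofFinite S
  letI : Field S := Fintype.fieldOfDomain S
  have hcard : Fintype.card S = Fintype.card F ^ Module.finrank F S := Module.card_eq_pow_finrank
  have hq : 1 < Fintype.card F := Fintype.one_lt_card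
  set N := Fintype.card F ^ d with hN
  have hN1 : 1 < N := one_lt_pow₀ hq (by omega)
  set P : Polynomial S := X ^ N - X with hP
  have hPdeg : P.natDegree = N := by
    rw [hP]
    rw [natDegree_sub_eq_left_of_natDegree_lt] <;> simp [hN1]
  have hP0 : P ≠ 0 := by
    intro h0
    rw [h0] at hPdeg
    simp at hPdeg; omega
  have hroot : ∀ y : S, y ∈ P.roots := by
    intro y
    rw [mem_roots hP0]
    have hy := h (y : K) y.2
    have : (y : S) ^ N = y := by
      ext; push_cast; exact hy
    simp [hP, IsRoot, this]
  have hsub : (Finset.univ : Finset S) ⊆ P.roots.toFinset := by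
    intro y _; simpa using hroot y
  have hcount : Fintype.card S ≤ N := by
    calc Fintype.card S = (Finset.univ : Finset S).card := rfl
      _ ≤ P.roots.toFinset.card := Finset.card_le_card hsub
      _ ≤ Multiset.card P.roots := Multiset.toFinset_card_le _
      _ ≤ P.natDegree := P.card_roots'
      _ = N := hPdeg
  rw [hcard] at hcount
  exact (Nat.pow_le_pow_iff_right hq).mp hcount


set_option maxHeartbeats 2000000 in
set_option synthInstance.maxHeartbeats 1000000 in
/-- Lemma 3.2: under linear independence of `v₁(β),…,v_r(β)` over `𝔽_{q^m}`,
right-sided conjugate cancellation holds for all `k` iff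
`𝔽_q(u₁(α),…,u_r(α)) = 𝔽_{q^m} = 𝔽_q(α)`. -/
theorem stmt10 (F : Type*) [Field F] [Fintype F] (q : ℕ) (hq : q = Fintype.card F)
    (m n : ℕ) (hm : 1 < m) (hn : 1 < n) (r : ℕ)
    (α β : AlgebraicClosure F)
    (hα : (minpoly F α).natDegree = m) (hβ : (minpoly F β).natDegree = n)
    (u : Fin r → Polynomial F) (v : Fin r → Polynomial F)
    -- `v₁(β),…,v_r(β)` are linearly independent over `𝔽_{q^m}`:
    (hv : ∀ c : Fin r → AlgebraicClosure F, (∀ s, c s ^ q ^ m = c s) →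
      ∑ s, c s * aeval β (v s) = 0 → ∀ s, c s = 0) :
    (∀ k : ℕ,
        (∑ s, aeval α (u s) * aeval β (v s)
          = ∑ s, aeval (α ^ q ^ k) (u s) * aeval β (v s)) → α = α ^ q ^ k) ↔
      Algebra.adjoin F (Set.range fun s => aeval α (u s)) = Algebra.adjoin F {α} := by
  classical
  subst hq
  set p := ringChar F with hpdef
  haveI : CharP F p := ringChar.charP F
  haveI hpF : Fact p.Prime := ⟨CharP.char_is_prime F p⟩
  obtain ⟨e, -, hcard⟩ := FiniteField.card F p
  haveI : CharP (AlgebraicClosure F) p := charP_of_injective_algebraMap (algebraMap F (AlgebraicClosure F)).injective p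
  haveI : ExpChar (AlgebraicClosure F) p := .prime hpF.out
  -- the Frobenius algebra endomorphism x ↦ x ^ q ^ k
  have hqp : ∀ k : ℕ, Fintype.card F ^ k = p ^ (e * (k : ℕ)) := by
    intro k; rw [pow_mul, ← hcard]
  let φ : ℕ → (AlgebraicClosure F →ₐ[F] AlgebraicClosure F) := fun k =>
    { toRingHom := iterateFrobenius (AlgebraicClosure F) p (e * k)
      commutes' := fun a => by
        show (algebraMap F (AlgebraicClosure F) a) ^ p ^ (e * k) = algebraMap F (AlgebraicClosure F) a
        rw [← hqp, ← map_pow, FiniteField.pow_card_pow] }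
  have hφ : ∀ (k : ℕ) (x : AlgebraicClosure F), φ k x = x ^ Fintype.card F ^ k := by
    intro k x
    show x ^ p ^ (e * k) = _
    rw [← hqp]
  have P1 : ∀ (k : ℕ) (x : AlgebraicClosure F) (g : Polynomial F),
      aeval (x ^ Fintype.card F ^ k) g = (aeval x g) ^ Fintype.card F ^ k := by
    intro k x g
    rw [← hφ, ← hφ, aeval_algHom_apply]
  -- the field F(α)
  have hint : IsIntegral F α := (Algebra.IsAlgebraic.isAlgebraic α).isIntegral
  set B := Algebra.adjoin F ({α} : Set (AlgebraicClosure F)) with hB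
  let pb := Algebra.adjoin.powerBasis (K := F) (S := AlgebraicClosure F) hint
  haveI : Module.Finite F B := pb.finite
  have hfrB : Module.finrank F B = m := by
    rw [pb.finrank, Algebra.adjoin.powerBasis_dim, hα]
  have hBfix : ∀ x ∈ B, x ^ Fintype.card F ^ m = x := by
    have := aux1 B
    rwa [hfrB] at this
  constructor
  · -- cancellation → adjoin eq
    intro hCanc
    set A := Algebra.adjoin F (Set.range fun s => aeval α (u s)) with hA
    have hgen : ∀ s, aeval α (u s) ∈ A := fun s => Algebra.subset_adjoin ⟨s, rfl⟩
    have hAB : A ≤ B := Algebra.adjoin_le (by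
      rintro x ⟨s, rfl⟩
      exact aeval_mem_adjoin_singleton F α)
    haveI : FiniteDimensional F (Subalgebra.toSubmodule B) := ‹Module.Finite F B›
    haveI : Module.Finite F A :=
      Submodule.finiteDimensional_of_le
        (show Subalgebra.toSubmodule A ≤ Subalgebra.toSubmodule B from hAB)
    set d := Module.finrank F A with hd
    have hd0 : 0 < d := Module.finrank_pos
    have hAfix : ∀ x ∈ A, x ^ Fintype.card F ^ d = x := aux1 A
    have hsum : ∑ s, aeval α (u s) * aeval β (v s)
        = ∑ s, aeval (α ^ Fintype.card F ^ d) (u s) * aeval β (v s) := by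
      refine Finset.sum_congr rfl fun s _ => ?_
      rw [P1, hAfix _ (hgen s)]
    have hfix := hCanc d hsum
    have hBfixd : ∀ x ∈ B, x ^ Fintype.card F ^ d = x := by
      intro x hx
      rw [hB, Algebra.adjoin_singleton_eq_range_aeval] at hx
      obtain ⟨g, hg⟩ := hx
      rw [← hg]
      exact show (aeval α) g ^ Fintype.card F ^ d = (aeval α) g by rw [← P1, ← hfix]
    have hmd : m ≤ d := by
      have := aux2 B d hd0 hBfixd
      rwa [hfrB] at this
    have hdm : d ≤ m := by
      rw [← hfrB]
      exact Submodule.finrank_mono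
        (show Subalgebra.toSubmodule A ≤ Subalgebra.toSubmodule B from hAB)
    refine Subalgebra.toSubmodule_injective ?_
    have hdm' : d = m := le_antisymm hdm hmd
    exact Submodule.eq_of_le_of_finrank_eq hAB
      (show Module.finrank F A = Module.finrank F B by rw [hfrB, ← hd, hdm'])
  · -- adjoin eq → cancellation
    intro hEq k hsumEq
    have hc : ∀ s, aeval α (u s) - aeval (α ^ Fintype.card F ^ k) (u s) = 0 := by
      apply hv
      · intro s
        rw [P1]
        set a := aeval α (u s) with ha
        have h1 : a ^ Fintype.card F ^ m = a :=
          hBfix _ (aeval_mem_adjoin_singleton F α)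
        have hsub : (a - a ^ Fintype.card F ^ k) ^ Fintype.card F ^ m
            = a ^ Fintype.card F ^ m - (a ^ Fintype.card F ^ k) ^ Fintype.card F ^ m := by
          rw [hqp m]
          exact sub_pow_expChar_pow ..
        rw [hsub, h1, ← pow_mul, mul_comm, pow_mul, h1]
      · simp only [sub_mul]
        rw [Finset.sum_sub_distrib, hsumEq, sub_self]
    have hgenfix : ∀ s, (φ k) (aeval α (u s)) = aeval α (u s) := by
      intro s
      rw [hφ]
      have h2 := sub_eq_zero.mp (hc s)
      rw [P1] at h2
      exact h2.symm
    have hle : Algebra.adjoin F (Set.range fun s => aeval α (u s))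
        ≤ AlgHom.equalizer (φ k) (AlgHom.id F (AlgebraicClosure F)) := by
      apply Algebra.adjoin_le
      rintro x ⟨s, rfl⟩
      exact (AlgHom.mem_equalizer _ _ _).2 (by simpa using hgenfix s)
    have hαmem : α ∈ AlgHom.equalizer (φ k) (AlgHom.id F (AlgebraicClosure F)) := by
      apply hle
      rw [hEq]
      exact Algebra.self_mem_adjoin_singleton F α
    have h3 : φ k α = α := hαmem
    rw [hφ] at h3
    exact h3.symm
end

section
/- Let q be a prime power, m > 1 an integer with smallest prime divisor m₁, ψ ∈ 𝔽_q[X] nonconstant with deg(ψ) < m₁, and α of degree m over 𝔽_q. Then ψ(α) has degree m over 𝔽_q, i.e., 𝔽_q(ψ(α)) = 𝔽_{q^m}. -/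
open Polynomial IntermediateField

/-- If `m > 1` has smallest prime divisor `m₁`, `ψ` is nonconstant of degree `< m₁`,
and `α` has degree `m` over `𝔽_q`, then `ψ(α)` has degree `m` over `𝔽_q`. -/
theorem stmt14 (F : Type*) [Field F] [Fintype F] (q : ℕ) (hq : q = Fintype.card F)
    (m : ℕ) (hm : 1 < m) (α : AlgebraicClosure F)
    (hα : (minpoly F α).natDegree = m)
    (ψ : Polynomial F) (hψ0 : 0 < ψ.natDegree) (hψ : ψ.natDegree < m.minFac) :
    (minpoly F (aeval α ψ)).natDegree = m := by
  classical
  set β : AlgebraicClosure F := aeval α ψ with hβ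
  have hαint : IsIntegral F α := Algebra.IsIntegral.isIntegral α
  have hβint : IsIntegral F β := Algebra.IsIntegral.isIntegral β
  set E : IntermediateField F (AlgebraicClosure F) := F⟮β⟯ with hE
  have hβE : β ∈ E := IntermediateField.mem_adjoin_simple_self F β
  have hαE : IsIntegral E α := hαint.tower_top
  -- β ∈ F⟮α⟯
  have hβFα : β ∈ F⟮α⟯ := by
    have hαmem : α ∈ F⟮α⟯ := IntermediateField.mem_adjoin_simple_self F α
    have h1 : aeval α ψ = ((aeval (⟨α, hαmem⟩ : F⟮α⟯) ψ : F⟮α⟯) : AlgebraicClosure F) :=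
      Polynomial.aeval_algHom_apply F⟮α⟯.val (⟨α, hαmem⟩ : F⟮α⟯) ψ
    rw [hβ, h1]
    exact (aeval (⟨α, hαmem⟩ : F⟮α⟯) ψ).2
  -- E⟮α⟯ restricted to F equals F⟮α⟯
  have hres : (IntermediateField.adjoin E {α}).restrictScalars F = F⟮α⟯ := by
    rw [hE, IntermediateField.adjoin_adjoin_left]
    apply le_antisymm
    · rw [IntermediateField.adjoin_le_iff]
      rintro x (rfl | rfl)
      · exact hβFα
      · exact IntermediateField.mem_adjoin_simple_self F _
    · exact IntermediateField.adjoin.mono F _ _ (Set.subset_union_right)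
  -- minpoly E α has degree ≤ deg ψ
  have hdegE : (minpoly E α).natDegree ≤ ψ.natDegree := by
    set p : Polynomial E := ψ.map (algebraMap F E) - C ⟨β, hβE⟩ with hp
    have hpdeg : p.natDegree = ψ.natDegree := by
      rw [hp, Polynomial.natDegree_sub_C, Polynomial.natDegree_map]
    have hpne : p ≠ 0 := fun h => by
      rw [h, Polynomial.natDegree_zero] at hpdeg; omega
    have hpev : aeval α p = 0 := by
      rw [hp]
      simp only [map_sub, Polynomial.aeval_map_algebraMap, Polynomial.aeval_C]
      have h2 : (algebraMap E (AlgebraicClosure F)) ⟨β, hβE⟩ = β := rfl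
      rw [h2, ← hβ, sub_self]
    calc (minpoly E α).natDegree ≤ p.natDegree :=
          Polynomial.natDegree_le_natDegree (minpoly.degree_le_of_ne_zero E α hpne hpev)
      _ = ψ.natDegree := hpdeg
  -- finrank computations
  have hd : Module.finrank F E = (minpoly F β).natDegree :=
    IntermediateField.adjoin.finrank hβint
  have he : Module.finrank E (IntermediateField.adjoin E {α}) = (minpoly E α).natDegree :=
    IntermediateField.adjoin.finrank hαE
  have hFα : Module.finrank F F⟮α⟯ = m := by
    rw [IntermediateField.adjoin.finrank hαint, hα]
  have htower : Module.finrank F E * Module.finrank E (IntermediateField.adjoin E {α})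
      = Module.finrank F F⟮α⟯ := by
    rw [← hres]
    exact Module.finrank_mul_finrank F E (IntermediateField.adjoin E {α})
  have hme : (minpoly F β).natDegree * (minpoly E α).natDegree = m := by
    rw [← hd, ← he, htower, hFα]
  have hedvd : (minpoly E α).natDegree ∣ m := ⟨(minpoly F β).natDegree, by rw [← hme]; ring⟩
  have he1 : (minpoly E α).natDegree = 1 := by
    by_contra h
    have h0 : (minpoly E α).natDegree ≠ 0 := by
      intro h0; rw [h0, mul_zero] at hme; omega
    have h2 : 2 ≤ (minpoly E α).natDegree := by omega
    have := Nat.minFac_le_of_dvd h2 hedvd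
    omega
  rw [he1, mul_one] at hme
  exact hme
end

section
/- Let q be a prime power, m > 1 an integer, m₁ its largest proper divisor, and ψ ∈ 𝔽_q[X] a nonzero q-linearized polynomial (of the form ∑ c_i X^{q^i}) with deg(ψ) < q^{m - m₁}. Then for every normal element α of 𝔽_{q^m} over 𝔽_q, ψ(α) generates 𝔽_{q^m} over 𝔽_q. -/
open Polynomial

/-- Theorem 4.3: if `m₁` is the largest proper divisor of `m` and `ψ` is a nonzero
`q`-linearized polynomial of degree `< q^{m-m₁}`, then `ψ(α)` generates `𝔽_{q^m}`
over `𝔽_q` for every normal element `α` of `𝔽_{q^m}` over `𝔽_q`. -/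
theorem stmt16 (F : Type*) [Field F] [Fintype F] (q : ℕ) (hq : q = Fintype.card F)
    (m : ℕ) (hm : 1 < m)
    (t : ℕ) (c : Fin t → F)
    (ψ : Polynomial F) (hψdef : ψ = ∑ i : Fin t, C (c i) * X ^ q ^ (i : ℕ))
    (hψ0 : ψ ≠ 0) (hψdeg : ψ.natDegree < q ^ (m - m / m.minFac))
    (α : AlgebraicClosure F) (hαmem : α ^ q ^ m = α)
    (hnormal : LinearIndependent F fun i : Fin m => α ^ q ^ (i : ℕ)) :
    (minpoly F (aeval α ψ)).natDegree = m := by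
  classical
  have hq2 : 2 ≤ q := by rw [hq]; exact Fintype.one_lt_card
  have hqe0 : ∀ e : ℕ, q ^ e ≠ 0 := fun e => pow_ne_zero e (by omega)
  set p := ringChar F with hp
  haveI hpF : CharP F p := ringChar.charP F
  haveI : CharP (AlgebraicClosure F) p :=
    charP_of_injective_algebraMap (algebraMap F (AlgebraicClosure F)).injective p
  obtain ⟨n, hpprime, hcard⟩ := FiniteField.card F p
  haveI : Fact p.Prime := ⟨hpprime⟩
  have hqpn : q = p ^ (n : ℕ) := hq.trans hcard
  have hadd : ∀ (e : ℕ) (x y : AlgebraicClosure F),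
      (x + y) ^ q ^ e = x ^ q ^ e + y ^ q ^ e := by
    intro e x y
    rw [hqpn, ← pow_mul]
    exact add_pow_char_pow x y p _
  have hFfix : ∀ (e : ℕ) (a : F), a ^ q ^ e = a := by
    intro e a
    rw [hq]; exact FiniteField.pow_card_pow e a
  have hφ : ∀ e : ℕ, ∃ φ : AlgebraicClosure F →ₐ[F] AlgebraicClosure F,
      ∀ x, φ x = x ^ q ^ e := by
    intro e
    refine ⟨{ toFun := fun x => x ^ q ^ e
              map_one' := one_pow _
              map_mul' := fun x y => mul_pow x y _
              map_zero' := zero_pow (hqe0 e)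
              map_add' := hadd e
              commutes' := fun a => ?_ }, fun x => rfl⟩
    show (algebraMap F (AlgebraicClosure F) a) ^ q ^ e = algebraMap F (AlgebraicClosure F) a
    rw [← map_pow, hFfix e a]
  have hconj : ∀ (e : ℕ) (x : AlgebraicClosure F),
      (aeval x ψ) ^ q ^ e = aeval (x ^ q ^ e) ψ := by
    intro e x
    obtain ⟨φ, hφe⟩ := hφ e
    rw [← hφe x, ← hφe (aeval x ψ), aeval_algHom_apply]
  have hstep : ∀ a : ℕ, α ^ q ^ (m + a) = α ^ q ^ a := by
    intro a
    rw [pow_add, pow_mul, hαmem]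
  have hper : ∀ j : ℕ, α ^ q ^ j = α ^ q ^ (j % m) := by
    intro j
    induction j using Nat.strong_induction_on with
    | _ j ih =>
      rcases lt_or_ge j m with h | h
      · rw [Nat.mod_eq_of_lt h]
      · obtain ⟨a, rfl⟩ : ∃ a, j = m + a := ⟨j - m, by omega⟩
        rw [hstep a, ih a (by omega), Nat.add_mod_left]
  have haev : ∀ x : AlgebraicClosure F,
      aeval x ψ = ∑ i : Fin t, c i • x ^ q ^ (i : ℕ) := by
    intro x
    rw [hψdef]
    simp [Algebra.smul_def]
  set β := aeval α ψ with hβ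
  set V : Submodule F (AlgebraicClosure F) :=
    Submodule.span F (Set.range fun i : Fin m => α ^ q ^ (i : ℕ)) with hV
  have hVrank : Module.finrank F V = m := by
    rw [hV, finrank_span_eq_card hnormal, Fintype.card_fin]
  have hgen : ∀ j : ℕ, α ^ q ^ j ∈ V := by
    intro j
    rw [hper j]
    exact Submodule.subset_span ⟨⟨j % m, Nat.mod_lt _ (by omega)⟩, rfl⟩
  have hβV : β ∈ V := by
    rw [hβ, haev]
    exact Submodule.sum_mem _ fun i _ => Submodule.smul_mem _ _ (hgen i)
  have hβm : β ^ q ^ m = β := by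
    rw [hβ, hconj, hαmem]
  have hβint : IsIntegral F β := (Algebra.IsAlgebraic.isAlgebraic (R := F) β).isIntegral
  set E := IntermediateField.adjoin F {β} with hE
  haveI : FiniteDimensional F E := IntermediateField.adjoin.finiteDimensional hβint
  set k := (minpoly F β).natDegree with hkdef
  have hkE : Module.finrank F E = k := IntermediateField.adjoin.finrank hβint
  have hβE : β ∈ E := IntermediateField.mem_adjoin_simple_self F β
  have hβk : β ^ q ^ k = β := by
    haveI : Finite E := Module.finite_of_finite F
    haveI := Fintype.ofFinite E
    have hb := FiniteField.pow_card (⟨β, hβE⟩ : E)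
    rw [Module.card_eq_pow_finrank (K := F) (V := E), ← hq, hkE] at hb
    have := congrArg Subtype.val hb
    simpa using this
  set S : IntermediateField F (AlgebraicClosure F) :=
    { carrier := {x : AlgebraicClosure F | x ^ q ^ m = x}
      mul_mem' := by
        intro a b ha hb
        simp only [Set.mem_setOf_eq] at ha hb ⊢
        rw [mul_pow, ha, hb]
      one_mem' := one_pow _
      zero_mem' := zero_pow (hqe0 m)
      add_mem' := by
        intro a b ha hb
        simp only [Set.mem_setOf_eq] at ha hb ⊢
        rw [hadd, ha, hb]
      algebraMap_mem' := by
        intro a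
        simp only [Set.mem_setOf_eq]
        rw [← map_pow, hFfix]
      inv_mem' := by
        intro x hx
        simp only [Set.mem_setOf_eq] at hx ⊢
        rw [inv_pow, hx] } with hS
  have hVS : ∀ x ∈ V, x ∈ S := by
    intro x hx
    rw [hV] at hx
    induction hx using Submodule.span_induction with
    | mem y hy =>
      obtain ⟨i, rfl⟩ := hy
      show (α ^ q ^ (i : ℕ)) ^ q ^ m = α ^ q ^ (i : ℕ)
      rw [← pow_mul, ← pow_add, hper ((i : ℕ) + m), Nat.add_mod_right,
        Nat.mod_eq_of_lt i.isLt]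
    | zero => exact zero_mem S
    | add x y _ _ hx hy => exact add_mem hx hy
    | smul a x _ hx =>
      have hx' : x ^ q ^ m = x := hx
      show (a • x) ^ q ^ m = a • x
      rw [Algebra.smul_def, mul_pow, ← map_pow, hFfix, hx']
  have hfne : (X ^ q ^ m - X : (AlgebraicClosure F)[X]) ≠ 0 :=
    FiniteField.X_pow_card_pow_sub_X_ne_zero _ (by omega) (by omega)
  have hSsub : (S : Set (AlgebraicClosure F)) ⊆
      ↑((X ^ q ^ m - X : (AlgebraicClosure F)[X]).roots.toFinset) := by
    intro x hx
    have hx' : x ^ q ^ m = x := hx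
    simp only [Finset.coe_sort_coe, Multiset.mem_toFinset, Finset.mem_coe,
      Polynomial.mem_roots hfne]
    show Polynomial.IsRoot _ x
    simp [Polynomial.IsRoot, hx']
  have hRcard : ((X ^ q ^ m - X : (AlgebraicClosure F)[X]).roots.toFinset).card ≤ q ^ m := by
    refine le_trans (Multiset.toFinset_card_le _) ?_
    have h1 := Polynomial.card_roots' (X ^ q ^ m - X : (AlgebraicClosure F)[X])
    rwa [FiniteField.X_pow_card_pow_sub_X_natDegree_eq _ (by omega) (by omega)] at h1
  haveI hSfinite : Finite S := (Set.Finite.subset (Finset.finite_toSet _) hSsub).to_subtype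
  haveI : FiniteDimensional F S := Module.finite_iff_finite.mpr hSfinite
  haveI := Fintype.ofFinite ↥S
  have hScard : Fintype.card S = q ^ Module.finrank F S := by
    rw [Module.card_eq_pow_finrank (K := F) (V := ↥S), ← hq]
  have hSle : Fintype.card S ≤ q ^ m := by
    refine le_trans ?_ hRcard
    rw [← Fintype.card_coe]
    exact Fintype.card_le_of_injective (fun x => ⟨x.1, hSsub x.2⟩)
      (fun a b hab => Subtype.ext (by simpa using congrArg Subtype.val hab))
  have hSge : q ^ m ≤ Fintype.card S := by
    haveI : FiniteDimensional F V := by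
      rw [hV]; exact FiniteDimensional.span_of_finite F (Set.finite_range _)
    haveI : Finite V := Module.finite_of_finite F
    haveI := Fintype.ofFinite ↥V
    have hVcard : Fintype.card V = q ^ m := by
      rw [Module.card_eq_pow_finrank (K := F) (V := ↥V), ← hq, hVrank]
    rw [← hVcard]
    exact Fintype.card_le_of_injective (fun x => ⟨x.1, hVS x.1 x.2⟩)
      (fun a b hab => Subtype.ext (by simpa using congrArg Subtype.val hab))
  have hSrank : Module.finrank F S = m := by
    have h2 := le_antisymm hSle hSge
    rw [hScard] at h2
    exact Nat.pow_right_injective hq2 h2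
  have hES : E ≤ S := by
    rw [hE]
    exact IntermediateField.adjoin_le_iff.mpr (Set.singleton_subset_iff.mpr (hVS β hβV))
  have hkm : k ∣ m := by
    refine ⟨IntermediateField.relfinrank E S, ?_⟩
    rw [← hSrank, ← hkE]
    exact (IntermediateField.finrank_bot_mul_relfinrank hES).symm
  rcases eq_or_lt_of_le (Nat.le_of_dvd (by omega) hkm) with hkm' | hkm'
  · exact hkm'
  exfalso
  have hk0 : 0 < k := minpoly.natDegree_pos hβint
  obtain ⟨d, hd⟩ := hkm
  have hd2 : 2 ≤ d := by
    rcases d with _ | _ | d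
    · omega
    · omega
    · omega
  have hmf : m.minFac ≤ d := Nat.minFac_le_of_dvd hd2 ⟨k, by rw [hd, mul_comm]⟩
  have hkm1 : k ≤ m / m.minFac := by
    have hkd : k = m / d := by rw [hd, Nat.mul_div_cancel k (by omega : 0 < d)]
    rw [hkd]
    exact Nat.div_le_div_left hmf m.minFac_pos
  -- β has period k under frobenius
  have hstepβ : ∀ a : ℕ, β ^ q ^ (k + a) = β ^ q ^ a := by
    intro a
    rw [pow_add, pow_mul, hβk]
  have hperβ : ∀ j : ℕ, β ^ q ^ j = β ^ q ^ (j % k) := by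
    intro j
    induction j using Nat.strong_induction_on with
    | _ j ih =>
      rcases lt_or_ge j k with h | h
      · rw [Nat.mod_eq_of_lt h]
      · obtain ⟨a, rfl⟩ : ∃ a, j = k + a := ⟨j - k, by omega⟩
        rw [hstepβ a, ih a (by omega), Nat.add_mod_left]
  -- the linearized map as a linear map on V
  have hLadd : ∀ x y : AlgebraicClosure F, aeval (x + y) ψ = aeval x ψ + aeval y ψ := by
    intro x y
    rw [haev, haev, haev, ← Finset.sum_add_distrib]
    exact Finset.sum_congr rfl fun i _ => by rw [hadd, smul_add]
  have hLsmul : ∀ (a : F) (x : AlgebraicClosure F), aeval (a • x) ψ = a • aeval x ψ := by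
    intro a x
    rw [haev, haev, Finset.smul_sum]
    refine Finset.sum_congr rfl fun i _ => ?_
    rw [_root_.smul_pow, hFfix, smul_comm]
  haveI : FiniteDimensional F V := by
    rw [hV]; exact FiniteDimensional.span_of_finite F (Set.finite_range _)
  set f : V →ₗ[F] AlgebraicClosure F :=
    { toFun := fun x => aeval (x : AlgebraicClosure F) ψ
      map_add' := fun x y => by simpa using hLadd x y
      map_smul' := fun a x => by simpa using hLsmul a x } with hf
  set W : Submodule F (AlgebraicClosure F) :=
    Submodule.span F (Set.range fun j : Fin k => β ^ q ^ (j : ℕ)) with hW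
  haveI : FiniteDimensional F W := by
    rw [hW]; exact FiniteDimensional.span_of_finite F (Set.finite_range _)
  have hWrank : Module.finrank F W ≤ k := by
    have := finrank_range_le_card (R := F) (fun j : Fin k => β ^ q ^ (j : ℕ))
    rw [Fintype.card_fin] at this
    exact this
  have hrange : LinearMap.range f ≤ W := by
    rintro _ ⟨⟨x, hxV⟩, rfl⟩
    show aeval x ψ ∈ W
    rw [hV] at hxV
    induction hxV using Submodule.span_induction with
    | mem y hy =>
      obtain ⟨i, rfl⟩ := hy
      rw [← hconj, hperβ]
      exact Submodule.subset_span ⟨⟨(i : ℕ) % k, Nat.mod_lt _ hk0⟩, rfl⟩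
    | zero =>
      have h0 : aeval (0 : AlgebraicClosure F) ψ = 0 := by
        rw [haev]
        simp [zero_pow (hqe0 _)]
      rw [h0]; exact zero_mem W
    | add x y _ _ hx hy => rw [hLadd]; exact add_mem hx hy
    | smul a x _ hx => rw [hLsmul]; exact Submodule.smul_mem W a hx
  have hrn := LinearMap.finrank_range_add_finrank_ker f
  have hrangerank : Module.finrank F (LinearMap.range f) ≤ k :=
    le_trans (Submodule.finrank_mono hrange) hWrank
  rw [hVrank] at hrn
  have hker : m - m / m.minFac ≤ Module.finrank F (LinearMap.ker f) := by omega
  -- count the kernel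
  haveI : Finite (LinearMap.ker f) := Module.finite_of_finite F
  haveI := Fintype.ofFinite ↥(LinearMap.ker f)
  have hkcard : Fintype.card (LinearMap.ker f) = q ^ Module.finrank F (LinearMap.ker f) := by
    rw [Module.card_eq_pow_finrank (K := F) (V := ↥(LinearMap.ker f)), ← hq]
  set ψK := ψ.map (algebraMap F (AlgebraicClosure F)) with hψK
  have hψK0 : ψK ≠ 0 := by
    rw [hψK, Ne, Polynomial.map_eq_zero_iff (algebraMap F (AlgebraicClosure F)).injective]
    exact hψ0
  have hroots : ∀ x : LinearMap.ker f, ((x : V) : AlgebraicClosure F) ∈ ψK.roots.toFinset := by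
    intro x
    have hx0 : aeval ((x : V) : AlgebraicClosure F) ψ = 0 := x.2
    rw [Multiset.mem_toFinset, Polynomial.mem_roots hψK0]
    show Polynomial.IsRoot _ _
    rw [Polynomial.IsRoot, hψK, Polynomial.eval_map, ← Polynomial.aeval_def, hx0]
  have hcount : Fintype.card (LinearMap.ker f) ≤ ψ.natDegree := by
    calc Fintype.card (LinearMap.ker f) ≤ Fintype.card ψK.roots.toFinset := by
          refine Fintype.card_le_of_injective (fun x => ⟨_, hroots x⟩) ?_
          intro a b hab
          exact Subtype.ext (Subtype.ext (by simpa using congrArg Subtype.val hab))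
      _ = ψK.roots.toFinset.card := Fintype.card_coe _
      _ ≤ Multiset.card ψK.roots := Multiset.toFinset_card_le _
      _ ≤ ψK.natDegree := Polynomial.card_roots' ψK
      _ = ψ.natDegree := Polynomial.natDegree_map_eq_of_injective
          (algebraMap F (AlgebraicClosure F)).injective ψ
  have hfinal : q ^ (m - m / m.minFac) ≤ Fintype.card (LinearMap.ker f) := by
    rw [hkcard]
    exact Nat.pow_le_pow_right (by omega) hker
  omega
end

section
/- Let q be a prime power and m, n > 1 coprime integers. If α is a normal element of 𝔽_{q^m} over 𝔽_q and β is a normal element of 𝔽_{q^n} over 𝔽_q, then for every d ∈ 𝔽_q the element α + β + d is not a normal element of 𝔽_{q^{mn}} over 𝔽_q; that is, the conjugates (α + β + d)^{q^k} for 0 ≤ k ≤ mn−1 are linearly dependent over 𝔽_q. -/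
section aux

variable {K : Type*} [Field K]

lemma pow_q_mul_aux (q m : ℕ) (x : K) (hx : x ^ q ^ m = x) (t : ℕ) :
    x ^ q ^ (m * t) = x := by
  induction t with
  | zero => simp
  | succ t ih => rw [Nat.mul_succ, pow_add, pow_mul, ih, hx]

/-- If `x` is fixed by `x ↦ x^(q^m)`, its conjugates are periodic mod `m`. -/
lemma conj_mod_aux (q m : ℕ) (x : K) (hx : x ^ q ^ m = x) (k : ℕ) :
    x ^ q ^ k = x ^ q ^ (k % m) := by
  conv_lhs => rw [← Nat.div_add_mod k m]
  rw [pow_add, pow_mul, pow_q_mul_aux q m x hx (k / m)]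

end aux

/-- The sum of normal elements (plus a constant) is never normal: if `α` is normal
in `𝔽_{q^m}`, `β` is normal in `𝔽_{q^n}`, `gcd(m,n) = 1` and `m, n > 1`, then for every
`d ∈ 𝔽_q` the conjugates of `α + β + d` are linearly dependent over `𝔽_q`. -/
theorem stmt17 (F : Type*) [Field F] [Fintype F] (q : ℕ) (hq : q = Fintype.card F)
    (m n : ℕ) (hm : 1 < m) (hn : 1 < n) (hmn : Nat.Coprime m n)
    (α β : AlgebraicClosure F)
    (hαmem : α ^ q ^ m = α)
    (hαnormal : LinearIndependent F fun i : Fin m => α ^ q ^ (i : ℕ))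
    (hβmem : β ^ q ^ n = β)
    (hβnormal : LinearIndependent F fun j : Fin n => β ^ q ^ (j : ℕ)) :
    ∀ d : F, ¬ LinearIndependent F
      fun k : Fin (m * n) => (α + β + algebraMap F (AlgebraicClosure F) d) ^ q ^ (k : ℕ) := by
  intro d hLI
  classical
  set D : AlgebraicClosure F := algebraMap F (AlgebraicClosure F) d with hD
  set γ : AlgebraicClosure F := α + β + D with hγ
  have hm0 : 0 < m := by omega
  have hn0 : 0 < n := by omega
  have hmn1 : 1 < m * n := by nlinarith
  -- q is a power of the characteristic p
  set p := ringChar F with hpdef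
  haveI : CharP F p := ringChar.charP F
  have hp : p.Prime := CharP.char_is_prime F p
  haveI : Fact p.Prime := ⟨hp⟩
  obtain ⟨s, -, hcard⟩ := FiniteField.card F p
  haveI : CharP (AlgebraicClosure F) p :=
    charP_of_injective_algebraMap (algebraMap F (AlgebraicClosure F)).injective p
  -- Frobenius powers are additive
  have hadd : ∀ (x y : AlgebraicClosure F) (k : ℕ),
      (x + y) ^ q ^ k = x ^ q ^ k + y ^ q ^ k := by
    intro x y k
    rw [hq, hcard, ← pow_mul, add_pow_char_pow]
  -- constants are fixed by Frobenius powers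
  have hDfix : ∀ k : ℕ, D ^ q ^ k = D := by
    intro k
    induction k with
    | zero => simp
    | succ t ih =>
      rw [pow_succ, pow_mul, ih, hD, ← map_pow, hq, FiniteField.pow_card]
  -- conjugates of γ
  have hconj : ∀ k : ℕ, γ ^ q ^ k = α ^ q ^ (k % m) + β ^ q ^ (k % n) + D := by
    intro k
    rw [hγ, hadd, hadd, hDfix, conj_mod_aux q m α hαmem, conj_mod_aux q n β hβmem]
  -- indices with prescribed residues
  obtain ⟨c10, hc10m, hc10n⟩ := Nat.chineseRemainder hmn 1 0
  obtain ⟨c01, hc01m, hc01n⟩ := Nat.chineseRemainder hmn 0 1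
  set k00 : Fin (m * n) := ⟨0, by omega⟩ with hk00
  set k11 : Fin (m * n) := ⟨1, hmn1⟩ with hk11
  set k10 : Fin (m * n) := ⟨c10 % (m * n), Nat.mod_lt _ (by omega)⟩ with hk10
  set k01 : Fin (m * n) := ⟨c01 % (m * n), Nat.mod_lt _ (by omega)⟩ with hk01
  have hdvdm : m ∣ m * n := ⟨n, rfl⟩
  have hdvdn : n ∣ m * n := ⟨m, mul_comm m n⟩
  have h00m : (k00 : ℕ) % m = 0 := Nat.zero_mod m
  have h00n : (k00 : ℕ) % n = 0 := Nat.zero_mod n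
  have h11m : (k11 : ℕ) % m = 1 := Nat.mod_eq_of_lt hm
  have h11n : (k11 : ℕ) % n = 1 := Nat.mod_eq_of_lt hn
  have h10m : (k10 : ℕ) % m = 1 := by
    show c10 % (m * n) % m = 1
    rw [Nat.mod_mod_of_dvd c10 hdvdm, (hc10m : c10 % m = 1 % m), Nat.mod_eq_of_lt hm]
  have h10n : (k10 : ℕ) % n = 0 := by
    show c10 % (m * n) % n = 0
    rw [Nat.mod_mod_of_dvd c10 hdvdn, (hc10n : c10 % n = 0 % n), Nat.zero_mod]
  have h01m : (k01 : ℕ) % m = 0 := by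
    show c01 % (m * n) % m = 0
    rw [Nat.mod_mod_of_dvd c01 hdvdm, (hc01m : c01 % m = 0 % m), Nat.zero_mod]
  have h01n : (k01 : ℕ) % n = 1 := by
    show c01 % (m * n) % n = 1
    rw [Nat.mod_mod_of_dvd c01 hdvdn, (hc01n : c01 % n = 1 % n), Nat.mod_eq_of_lt hn]
  -- distinctness
  have hnem : ∀ a b : Fin (m * n), (a : ℕ) % m ≠ (b : ℕ) % m → a ≠ b :=
    fun a b hab h => hab (by rw [h])
  have hnen : ∀ a b : Fin (m * n), (a : ℕ) % n ≠ (b : ℕ) % n → a ≠ b :=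
    fun a b hab h => hab (by rw [h])
  have hne1 : k00 ≠ k11 := hnem _ _ (by rw [h00m, h11m]; omega)
  have hne2 : k00 ≠ k10 := hnem _ _ (by rw [h00m, h10m]; omega)
  have hne3 : k00 ≠ k01 := hnen _ _ (by rw [h00n, h01n]; omega)
  have hne4 : k11 ≠ k10 := hnen _ _ (by rw [h11n, h10n]; omega)
  have hne5 : k11 ≠ k01 := hnem _ _ (by rw [h11m, h01m]; omega)
  have hne6 : k10 ≠ k01 := hnem _ _ (by rw [h10m, h01m]; omega)
  -- the linear relation
  set v : Fin (m * n) → AlgebraicClosure F := fun k => γ ^ q ^ (k : ℕ) with hv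
  have key : v k00 + v k11 - v k10 - v k01 = 0 := by
    simp only [hv, hconj, h00m, h00n, h11m, h11n, h10m, h10n, h01m, h01n]
    ring
  set g : Fin (m * n) → F := fun k =>
    (if k = k00 then 1 else 0) + (if k = k11 then 1 else 0)
      - (if k = k10 then 1 else 0) - (if k = k01 then 1 else 0) with hg
  have hsum : ∑ k, g k • v k = 0 := by
    simp only [hg, sub_smul, add_smul, ite_smul, one_smul, zero_smul]
    rw [Finset.sum_sub_distrib, Finset.sum_sub_distrib, Finset.sum_add_distrib]
    simp only [Finset.sum_ite_eq', Finset.mem_univ, if_true]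
    exact key
  have hz := Fintype.linearIndependent_iff.mp hLI g hsum k00
  have hg00 : g k00 = 1 := by
    simp [hg, hne1, hne2, hne3]
  rw [hg00] at hz
  exact one_ne_zero hz
end

section
/- Let q be an odd prime power, m, n > 1 coprime integers, and k, ℓ nonnegative integers. Let α be a normal element of 𝔽_{q^m} over 𝔽_q and β a normal element of 𝔽_{q^n} over 𝔽_q. Then α^{q^k}β + αβ^{q^ℓ} is a normal element of 𝔽_{q^{mn}} over 𝔽_q if and only if one of the following holds: (i) m and n are both odd; (ii) m is even and ν₂(m) ≤ ν₂(k); (iii) n is even and ν₂(n) ≤ ν₂(ℓ). Moreover, if q is even, α^{q^k}β + αβ^{q^ℓ} is never normal. -/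
/-!
Put `θ = αβ`. The fields `F(α)` and `F(β)` have coprime degrees, hence are linearly disjoint, so
`θ` is normal in `𝔽_{q^{mn}}` and `X^j ↦ θ^{q^j}` is an injective `F`-linear map from
`F[X]/(X^{mn} - 1)` to `𝔽̄_q` turning multiplication by `X` into the Frobenius. Choosing
`a ≡ k, b ≡ 0 (mod m)` and `a ≡ 0, b ≡ ℓ (mod n)`, the element `α^{q^k}β + αβ^{q^ℓ}` is the image
of `X^a + X^b`, so it is normal iff `X^a + X^b` is a unit modulo `X^{mn} - 1`, i.e. iff no
`mn`-th root of unity `ζ` satisfies `ζ^{a-b} = -1`. In characteristic `2` the root `ζ = 1` does;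
otherwise such a `ζ` exists iff `2^{ν₂(mn)} ∤ a - b`, and as one of `m, n` is odd this condition
reduces modulo `2^{ν₂(m)}` or `2^{ν₂(n)}` to one on `k` or on `ℓ`.
-/

open Polynomial Module IntermediateField

section PeriodicPowers

variable {M : Type*} [Monoid M] {x : M} {q m : ℕ}

theorem pow_pow_mod_eq (hx : x ^ q ^ m = x) (i : ℕ) : x ^ q ^ (i % m) = x ^ q ^ i := by
  have hper : Function.IsPeriodicPt (· ^ q) m x := by
    simpa [Function.IsPeriodicPt, Function.IsFixedPt, pow_iterate] using hx
  simpa [pow_iterate] using hper.iterate_mod_apply i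

theorem pow_pow_eq_of_modEq (hx : x ^ q ^ m = x) {i j : ℕ} (hij : i ≡ j [MOD m]) :
    x ^ q ^ i = x ^ q ^ j := by
  rw [← pow_pow_mod_eq hx i, ← pow_pow_mod_eq hx j, hij]

theorem pow_pow_mul_pow_pow {M : Type*} [CommMonoid M] {x y : M} {q m n c i j : ℕ}
    (hx : x ^ q ^ m = x) (hy : y ^ q ^ n = y) (hi : c ≡ i [MOD m]) (hj : c ≡ j [MOD n]) :
    x ^ q ^ i * y ^ q ^ j = (x * y) ^ q ^ c := by
  rw [mul_pow, pow_pow_eq_of_modEq hx hi, pow_pow_eq_of_modEq hy hj]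

end PeriodicPowers

section FiniteField

variable {F K : Type*} [Field F] [Fintype F] [Field K] [Algebra F K]

theorem FiniteField.odd_card_iff_two_ne_zero : Odd (Fintype.card F) ↔ (2 : F) ≠ 0 := by
  rw [Nat.odd_iff, ← Nat.mod_two_ne_zero, Ne, ← FiniteField.even_card_iff_char_two,
    ← neg_one_eq_one_iff, neg_eq_iff_add_eq_zero, one_add_one_eq_two]

theorem add_pow_card_pow (x y : K) (s : ℕ) :
    (x + y) ^ Fintype.card F ^ s = x ^ Fintype.card F ^ s + y ^ Fintype.card F ^ s := by
  simpa [AlgHom.coe_pow, FiniteField.coe_frobeniusAlgHom, pow_iterate] using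
    map_add (FiniteField.frobeniusAlgHom F K ^ s) x y

theorem finrank_adjoin_simple_dvd {x : K} (hx : IsIntegral F x) {m : ℕ}
    (hxm : x ^ Fintype.card F ^ m = x) : finrank F F⟮x⟯ ∣ m := by
  have := adjoin.finiteDimensional hx
  have : Finite F⟮x⟯ := Module.finite_of_finite F
  rw [← FiniteField.orderOf_frobeniusAlgEquivOfAlgebraic F F⟮x⟯]
  refine orderOf_dvd_of_pow_eq_one (AlgEquiv.coe_toAlgHom_injective (adjoin_algHom_ext F ?_))
  rintro _ rfl
  ext
  simpa [FiniteField.coe_frobeniusAlgEquivOfAlgebraic, pow_iterate] using hxm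

theorem linearIndependent_pow_card_pow_mul {x y : K} {m n : ℕ} (hmn : m.Coprime n)
    (hx : IsIntegral F x) (hy : IsIntegral F y)
    (hxm : x ^ Fintype.card F ^ m = x) (hyn : y ^ Fintype.card F ^ n = y)
    (hxi : LinearIndependent F fun i : Fin m => x ^ Fintype.card F ^ (i : ℕ))
    (hyi : LinearIndependent F fun j : Fin n => y ^ Fintype.card F ^ (j : ℕ)) :
    LinearIndependent F fun s : Fin (m * n) => (x * y) ^ Fintype.card F ^ (s : ℕ) := by
  have hdisj : F⟮x⟯.LinearDisjoint F⟮y⟯ := .of_finrank_coprime <|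
    (hmn.coprime_dvd_left (finrank_adjoin_simple_dvd hx hxm)).coprime_dvd_right
      (finrank_adjoin_simple_dvd hy hyn)
  have hprod := hdisj.linearIndependent_mul
    (a := fun i : Fin m => ⟨_, pow_mem (mem_adjoin_simple_self F x) (Fintype.card F ^ (i : ℕ))⟩)
    (b := fun j : Fin n => ⟨_, pow_mem (mem_adjoin_simple_self F y) (Fintype.card F ^ (j : ℕ))⟩)
    (.of_comp F⟮x⟯.val.toLinearMap hxi) (.of_comp F⟮y⟯.val.toLinearMap hyi)
  let crt : Fin (m * n) → Fin m × Fin n := fun s =>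
    (⟨s % m, Nat.mod_lt _ (Nat.pos_of_mul_pos_right s.pos)⟩,
      ⟨s % n, Nat.mod_lt _ (Nat.pos_of_mul_pos_left s.pos)⟩)
  have hcrt : Function.Injective crt := fun s t hst => by
    simp only [crt, Prod.mk.injEq, Fin.mk.injEq] at hst
    exact Fin.ext (Nat.ModEq.eq_of_lt_of_lt
      ((Nat.modEq_and_modEq_iff_modEq_mul hmn).1 hst) s.isLt t.isLt)
  convert hprod.comp crt hcrt with s
  exact (pow_pow_mul_pow_pow hxm hyn (Nat.mod_modEq s m).symm (Nat.mod_modEq s n).symm).symm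

end FiniteField

theorem Module.Basis.linearIndependent_comp_iff_injective {R M N ι : Type*} [Ring R]
    [AddCommGroup M] [Module R M] [AddCommGroup N] [Module R N] (b : Basis ι R M)
    (f : M →ₗ[R] N) : LinearIndependent R (f ∘ b) ↔ Function.Injective f :=
  ⟨f.injective_of_linearIndependent b.span_eq,
    fun hf => b.linearIndependent.map' f (LinearMap.ker_eq_bot.2 hf)⟩

theorem isUnit_iff_injective_mul_left (F : Type*) {A : Type*} [Field F] [Ring A] [Algebra F A]
    [FiniteDimensional F A] {u : A} : IsUnit u ↔ Function.Injective (u * ·) := by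
  rw [IsUnit.isUnit_iff_mulLeft_bijective]
  exact ⟨(·.1), fun h => ⟨h, (LinearMap.mulLeft F u).injective_iff_surjective.1 h⟩⟩

theorem linearIndependent_map_mul_basis_iff_isUnit {F A V ι : Type*} [Field F] [Ring A]
    [Algebra F A] [AddCommGroup V] [Module F V] [Finite ι]
    (b : Basis ι F A) {Φ : A →ₗ[F] V} (hΦ : Function.Injective Φ) (u : A) :
    LinearIndependent F (fun i => Φ (u * b i)) ↔ IsUnit u := by
  have := b.finiteDimensional_of_finite
  rw [isUnit_iff_injective_mul_left F, ← hΦ.of_comp_iff]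
  exact b.linearIndependent_comp_iff_injective (Φ ∘ₗ LinearMap.mulLeft F u)

theorem AdjoinRoot.isUnit_mk_iff_isCoprime {R : Type*} [CommRing R] {g P : R[X]} :
    IsUnit (mk g P) ↔ IsCoprime P g := by
  simp only [isUnit_iff_exists_inv, ← map_one (mk g)]
  constructor
  · rintro ⟨v, hv⟩
    obtain ⟨V, rfl⟩ := mk_surjective v
    rw [← map_mul, mk_eq_mk] at hv
    obtain ⟨c, hc⟩ := hv
    exact ⟨V, -c, by linear_combination hc⟩
  · rintro ⟨u, v, h⟩
    exact ⟨mk g u, by rw [← map_mul, mk_eq_mk]; exact ⟨-v, by linear_combination h⟩⟩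

section CyclicAlgebra

variable {F : Type*} [Field F] {N : ℕ}

theorem AdjoinRoot.root_X_pow_sub_one_pow : root (X ^ N - 1 : F[X]) ^ N = 1 := by
  have h := AdjoinRoot.mk_self (f := (X ^ N - 1 : F[X]))
  rwa [map_sub, map_pow, AdjoinRoot.mk_X, map_one, sub_eq_zero] at h

variable (F) in
noncomputable def rootPowBasis (hN : N ≠ 0) : Basis (Fin N) F (AdjoinRoot (X ^ N - 1 : F[X])) :=
  (AdjoinRoot.powerBasis' (monic_X_pow_sub (by simpa using Nat.pos_of_ne_zero hN))).basis.reindex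
    (finCongr (by simpa using natDegree_X_pow_sub_C (n := N) (r := (1 : F))))

theorem rootPowBasis_apply (hN : N ≠ 0) (i : Fin N) :
    rootPowBasis F hN i = AdjoinRoot.root (X ^ N - 1 : F[X]) ^ (i : ℕ) := by
  simp [rootPowBasis]

theorem rootPowBasis_constr_root_pow {V : Type*} [AddCommGroup V] [Module F V] (hN : N ≠ 0)
    {v : ℕ → V} (hv : ∀ j, v (j % N) = v j) (j : ℕ) :
    (rootPowBasis F hN).constr F (fun i => v i) (AdjoinRoot.root (X ^ N - 1 : F[X]) ^ j) =
      v j := by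
  rw [pow_eq_pow_mod j AdjoinRoot.root_X_pow_sub_one_pow, ← hv,
    ← rootPowBasis_apply hN ⟨j % N, Nat.mod_lt j (Nat.pos_of_ne_zero hN)⟩, Basis.constr_basis]

end CyclicAlgebra

section RootsOfUnity

variable {L : Type*} [Field L] {N : ℕ} {x : ℤ}

theorem zpow_ne_neg_one_of_two_pow_dvd (h2 : (2 : L) ≠ 0) (hN : N ≠ 0) {ζ : L}
    (hζ : ζ ^ N = 1) (hx : (2 : ℤ) ^ padicValNat 2 N ∣ x) : ζ ^ x ≠ -1 := by
  intro hζx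
  obtain ⟨y, rfl⟩ := hx
  obtain ⟨w, hw⟩ : 2 ^ padicValNat 2 N ∣ N := pow_padicValNat_dvd
  have hw_odd : Odd (w : ℤ) := by
    refine (Int.odd_coe_nat w).2 <| Nat.odd_iff.2 <| Nat.two_dvd_ne_zero.1 fun h2w =>
      pow_succ_padicValNat_not_dvd (p := 2) hN ?_
    conv_rhs => rw [hw]
    exact pow_succ 2 _ ▸ mul_dvd_mul_left _ h2w
  have hNy : (2 : ℤ) ^ padicValNat 2 N * y * w = N * y := by
    conv_rhs => rw [hw]
    push_cast
    ring
  -- raising `ζ ^ x = -1` to the odd power `w = N / 2 ^ ν₂(N)` gives `ζ ^ (N * y) = -1`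
  have h : (ζ ^ ((2 : ℤ) ^ padicValNat 2 N * y)) ^ (w : ℤ) = -1 := by
    rw [hζx, hw_odd.neg_one_zpow]
  rw [← zpow_mul, hNy, zpow_mul, zpow_natCast, hζ, one_zpow] at h
  exact h2 (by linear_combination h)

theorem exists_pow_eq_one_zpow_eq_neg_one [IsAlgClosed L] (h2 : (2 : L) ≠ 0)
    (hx : ¬ (2 : ℤ) ^ padicValNat 2 N ∣ x) : ∃ ζ : L, ζ ^ N = 1 ∧ ζ ^ x = -1 := by
  have hx0 : x ≠ 0 := by rintro rfl; exact hx (dvd_zero _)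
  obtain ⟨y, hxy, hy⟩ := (Int.finiteMultiplicity_iff (a := 2) (b := x)).2
    ⟨by decide, hx0⟩ |>.exists_eq_pow_mul_and_not_dvd
  set u := multiplicity 2 x
  have hu : u + 1 ≤ padicValNat 2 N := by
    by_contra! h
    exact hx (hxy ▸ (pow_dvd_pow 2 (by omega)).mul_right y)
  have : NeZero ((2 ^ (u + 1) : ℕ) : L) := ⟨by push_cast; exact pow_ne_zero _ h2⟩
  obtain ⟨ζ, hζ⟩ := HasEnoughRootsOfUnity.exists_primitiveRoot L (2 ^ (u + 1))
  refine ⟨ζ, (hζ.pow_eq_one_iff_dvd N).2 ((pow_dvd_pow 2 hu).trans pow_padicValNat_dvd), ?_⟩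
  have hζu : ζ ^ 2 ^ u = -1 := by
    have := hζ.pow_of_dvd (pow_ne_zero u two_ne_zero) (pow_dvd_pow 2 u.le_succ)
    rw [pow_succ, Nat.mul_div_cancel_left _ (by positivity)] at this
    exact this.eq_neg_one_of_two_right
  have hy_odd : Odd y := Int.not_even_iff_odd.1 (by rwa [even_iff_two_dvd])
  rw [hxy, zpow_mul, show (2 : ℤ) ^ u = ((2 ^ u : ℕ) : ℤ) by push_cast; rfl, zpow_natCast, hζu,
    hy_odd.neg_one_zpow]

theorem pow_add_pow_eq_zero_iff_zpow_sub_eq_neg_one {ζ : L} (hζ : ζ ≠ 0) (a b : ℕ) :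
    ζ ^ a + ζ ^ b = 0 ↔ ζ ^ ((a : ℤ) - b) = -1 := by
  rw [zpow_sub₀ hζ, zpow_natCast, zpow_natCast, div_eq_iff (pow_ne_zero _ hζ), neg_one_mul,
    add_eq_zero_iff_eq_neg]

end RootsOfUnity

theorem isUnit_root_pow_add_root_pow_iff {F : Type*} [Field F] {N : ℕ} (hN : N ≠ 0) (a b : ℕ) :
    IsUnit (AdjoinRoot.root (X ^ N - 1 : F[X]) ^ a + AdjoinRoot.root (X ^ N - 1 : F[X]) ^ b) ↔
      (2 : F) ≠ 0 ∧ (2 : ℤ) ^ padicValNat 2 N ∣ (a : ℤ) - b := by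
  let L := AlgebraicClosure F
  have h2 : (2 : L) ≠ 0 ↔ (2 : F) ≠ 0 := by
    rw [← map_ofNat (algebraMap F L) 2, _root_.map_ne_zero]
  have hroot : ∀ ζ : L, ζ ^ N = 1 → (ζ ^ a + ζ ^ b = 0 ↔ ζ ^ ((a : ℤ) - b) = -1) := fun ζ hζ =>
    pow_add_pow_eq_zero_iff_zpow_sub_eq_neg_one (by rintro rfl; simp [hN] at hζ) a b
  have hmk : AdjoinRoot.root (X ^ N - 1 : F[X]) ^ a + AdjoinRoot.root (X ^ N - 1 : F[X]) ^ b =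
      AdjoinRoot.mk _ (X ^ a + X ^ b) := by simp
  rw [hmk, AdjoinRoot.isUnit_mk_iff_isCoprime, isCoprime_iff_aeval_ne_zero_of_isAlgClosed F L]
  simp only [map_add, map_sub, map_pow, aeval_X, map_one, ne_eq, sub_eq_zero, ← not_and_or]
  constructor
  · intro h
    have h2F : (2 : F) ≠ 0 := fun h2F => h 1 ⟨by
      rw [one_pow, one_pow, one_add_one_eq_two, ← map_ofNat (algebraMap F L) 2, h2F, map_zero],
      one_pow N⟩
    refine ⟨h2F, by_contra fun hdvd => ?_⟩
    obtain ⟨ζ, hζN, hζx⟩ := exists_pow_eq_one_zpow_eq_neg_one (h2.2 h2F) hdvd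
    exact h ζ ⟨(hroot ζ hζN).2 hζx, hζN⟩
  · rintro ⟨h2F, hdvd⟩ ζ ⟨hζ, hζN⟩
    exact zpow_ne_neg_one_of_two_pow_dvd (h2.2 h2F) hN hζN hdvd ((hroot ζ hζN).1 hζ)

theorem linearIndependent_pow_card_pow_add_iff {F K : Type*} [Field F] [Fintype F] [Field K]
    [Algebra F K] {N : ℕ} (hN : N ≠ 0) {θ : K} (hθN : θ ^ Fintype.card F ^ N = θ)
    (hθ : LinearIndependent F fun i : Fin N => θ ^ Fintype.card F ^ (i : ℕ)) (a b : ℕ) :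
    (LinearIndependent F fun s : Fin N =>
      (θ ^ Fintype.card F ^ a + θ ^ Fintype.card F ^ b) ^ Fintype.card F ^ (s : ℕ)) ↔
      (2 : F) ≠ 0 ∧ (2 : ℤ) ^ padicValNat 2 N ∣ (a : ℤ) - b := by
  let Φ := (rootPowBasis F hN).constr F fun i => θ ^ Fintype.card F ^ (i : ℕ)
  let r := AdjoinRoot.root (X ^ N - 1 : F[X])
  have hΦ (j : ℕ) : Φ (r ^ j) = θ ^ Fintype.card F ^ j :=
    rootPowBasis_constr_root_pow hN (v := fun j => θ ^ Fintype.card F ^ j) (pow_pow_mod_eq hθN) j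
  have hconj (s : Fin N) :
      (θ ^ Fintype.card F ^ a + θ ^ Fintype.card F ^ b) ^ Fintype.card F ^ (s : ℕ) =
        Φ ((r ^ a + r ^ b) * rootPowBasis F hN s) := by
    rw [rootPowBasis_apply, add_mul, ← pow_add, ← pow_add, map_add, hΦ, hΦ, add_pow_card_pow,
      ← pow_mul, ← pow_add, ← pow_mul, ← pow_add]
  simp_rw [hconj]
  exact (linearIndependent_map_mul_basis_iff_isUnit _
    (Basis.injective_constr_of_linearIndependent _ hθ) _).trans
      (isUnit_root_pow_add_root_pow_iff hN a b)

theorem two_pow_padicValNat_mul_dvd_iff {m n : ℕ} (hm : m ≠ 0) (hn : Odd n) {x y : ℤ}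
    (hxy : x ≡ y [ZMOD m]) :
    (2 : ℤ) ^ padicValNat 2 (m * n) ∣ x ↔ (2 : ℤ) ^ padicValNat 2 m ∣ y := by
  rw [padicValNat.mul hm hn.pos.ne', padicValNat.eq_zero_of_not_dvd hn.not_two_dvd_nat, add_zero]
  exact (hxy.of_dvd (by exact_mod_cast pow_padicValNat_dvd)).dvd_iff

theorem two_pow_padicValNat_mul_dvd_iff_of_coprime {m n k ℓ : ℕ} (hm : m ≠ 0) (hn : n ≠ 0)
    (hmn : m.Coprime n) {x : ℤ} (hk : x ≡ k [ZMOD m]) (hℓ : x ≡ -ℓ [ZMOD n]) :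
    (2 : ℤ) ^ padicValNat 2 (m * n) ∣ x ↔
      (Odd m ∧ Odd n) ∨ (Even m ∧ 2 ^ padicValNat 2 m ∣ k) ∨
        (Even n ∧ 2 ^ padicValNat 2 n ∣ ℓ) := by
  rcases Nat.even_or_odd m with hme | hmo
  · have hno : Odd n := (hmn.coprime_dvd_left (even_iff_two_dvd.1 hme)).odd_of_left
    rw [two_pow_padicValNat_mul_dvd_iff hm hno hk]
    simp [hme, Nat.not_odd_iff_even.2 hme, Nat.not_even_iff_odd.2 hno]
    exact_mod_cast Iff.rfl
  rcases Nat.even_or_odd n with hne | hno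
  · rw [mul_comm, two_pow_padicValNat_mul_dvd_iff hn hmo hℓ, dvd_neg]
    simp [hne, Nat.not_odd_iff_even.2 hne, Nat.not_even_iff_odd.2 hmo]
    exact_mod_cast Iff.rfl
  · rw [two_pow_padicValNat_mul_dvd_iff hm hno hk,
      padicValNat.eq_zero_of_not_dvd hmo.not_two_dvd_nat]
    simp [hmo, hno]

/-- Theorem 4.7: for normal `α ∈ 𝔽_{q^m}`, `β ∈ 𝔽_{q^n}` with `gcd(m,n)=1`, `m,n > 1`
and `q` odd, the element `α^{q^k}β + αβ^{q^ℓ}` is normal in `𝔽_{q^{mn}}` iff `m,n` are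
both odd, or `m` is even with `ν₂(m) ≤ ν₂(k)`, or `n` is even with `ν₂(n) ≤ ν₂(ℓ)`.
(The condition `ν₂(m) ≤ ν₂(k)` is encoded as `2^{ν₂(m)} ∣ k`, which also handles
`k = 0`, where `ν₂(0) = ∞`.) If `q` is even, the element is never normal. -/
theorem stmt18 (F : Type*) [Field F] [Fintype F] (q : ℕ) (hq : q = Fintype.card F)
    (m n : ℕ) (hm : 1 < m) (hn : 1 < n) (hmn : Nat.Coprime m n) (k ℓ : ℕ)
    (α β : AlgebraicClosure F)
    (hαmem : α ^ q ^ m = α)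
    (hαnormal : LinearIndependent F fun i : Fin m => α ^ q ^ (i : ℕ))
    (hβmem : β ^ q ^ n = β)
    (hβnormal : LinearIndependent F fun j : Fin n => β ^ q ^ (j : ℕ)) :
    (Odd q →
      ((LinearIndependent F
          fun s : Fin (m * n) => (α ^ q ^ k * β + α * β ^ q ^ ℓ) ^ q ^ (s : ℕ)) ↔
        (Odd m ∧ Odd n) ∨
        (Even m ∧ 2 ^ padicValNat 2 m ∣ k) ∨
        (Even n ∧ 2 ^ padicValNat 2 n ∣ ℓ))) ∧
    (Even q → ¬ LinearIndependent F
        fun s : Fin (m * n) => (α ^ q ^ k * β + α * β ^ q ^ ℓ) ^ q ^ (s : ℕ)) := by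
  subst hq
  have hN : m * n ≠ 0 := by positivity
  have hθ := linearIndependent_pow_card_pow_mul hmn (Algebra.IsIntegral.isIntegral α)
    (Algebra.IsIntegral.isIntegral β) hαmem hβmem hαnormal hβnormal
  have hθN : (α * β) ^ Fintype.card F ^ (m * n) = α * β := by
    simpa using (pow_pow_mul_pow_pow hαmem hβmem (Nat.modEq_zero_iff_dvd.2 (dvd_mul_right m n))
      (Nat.modEq_zero_iff_dvd.2 (dvd_mul_left n m))).symm
  obtain ⟨a, ha⟩ := Nat.chineseRemainder hmn k 0
  obtain ⟨b, hb⟩ := Nat.chineseRemainder hmn 0 ℓ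
  have hγ : α ^ Fintype.card F ^ k * β + α * β ^ Fintype.card F ^ ℓ =
      (α * β) ^ Fintype.card F ^ a + (α * β) ^ Fintype.card F ^ b := by
    congr 1
    · simpa using pow_pow_mul_pow_pow hαmem hβmem ha.1 ha.2
    · simpa using pow_pow_mul_pow_pow hαmem hβmem hb.1 hb.2
  rw [hγ, linearIndependent_pow_card_pow_add_iff hN hθN hθ,
    two_pow_padicValNat_mul_dvd_iff_of_coprime (by omega) (by omega) hmn
      (by simpa using (Int.natCast_modEq_iff.2 ha.1).sub (Int.natCast_modEq_iff.2 hb.1))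
      (by simpa using (Int.natCast_modEq_iff.2 ha.2).sub (Int.natCast_modEq_iff.2 hb.2)),
    ← FiniteField.odd_card_iff_two_ne_zero]
  exact ⟨fun hodd => by simp [hodd], fun heven h => Nat.not_odd_iff_even.2 heven h.1⟩
end

section
/- Let q be a prime power, m, n > 1 coprime integers, and k, ℓ nonnegative integers. Let α be a normal element of 𝔽_{q^m} over 𝔽_q and β a normal element of 𝔽_{q^n} over 𝔽_q. Then α^{q^k}β − αβ^{q^ℓ} is never a normal element of 𝔽_{q^{mn}} over 𝔽_q. -/
/-!
By the Chinese remainder theorem there are `s ≡ k, t ≡ 0 (mod m)` and `s ≡ 0, t ≡ ℓ (mod n)`, so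
with `x = αβ ∈ 𝔽_{q^{mn}}` the element is `γ = x^{q^s} - x^{q^t}`. The sum of its conjugates
`∑_{u < mn} γ^{q^u}` is `Tr(x^{q^s}) - Tr(x^{q^t}) = Tr x - Tr x = 0`, a nontrivial linear
relation among them, so `γ` is not normal.
-/

open Finset

theorem pow_pow_eq_of_modEq_s19 {M : Type*} [Monoid M] {q N a b : ℕ} {x : M}
    (hx : x ^ q ^ N = x) (hab : a ≡ b [MOD N]) : x ^ q ^ a = x ^ q ^ b := by
  have hper : Function.IsPeriodicPt (· ^ q) N x := by
    simpa [Function.IsPeriodicPt, Function.IsFixedPt, pow_iterate] using hx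
  have hmod (c : ℕ) : x ^ q ^ c = (· ^ q)^[c % N] x := by rw [hper.iterate_mod_apply, pow_iterate]
  rw [hmod a, hmod b, hab]

theorem exists_mul_pow_pow_eq {M : Type*} [CommMonoid M] {q m n : ℕ} (hmn : m.Coprime n)
    {α β : M} (hα : α ^ q ^ m = α) (hβ : β ^ q ^ n = β) (k ℓ : ℕ) :
    ∃ s, (α * β) ^ q ^ s = α ^ q ^ k * β ^ q ^ ℓ := by
  obtain ⟨s, hsk, hsℓ⟩ := Nat.chineseRemainder hmn k ℓ
  exact ⟨s, by rw [mul_pow, pow_pow_eq_of_modEq_s19 hα hsk, pow_pow_eq_of_modEq_s19 hβ hsℓ]⟩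

theorem mul_pow_pow_mul_eq_self {M : Type*} [CommMonoid M] {q m n : ℕ} {α β : M}
    (hα : α ^ q ^ m = α) (hβ : β ^ q ^ n = β) : (α * β) ^ q ^ (m * n) = α * β := by
  rw [mul_pow, pow_pow_eq_of_modEq_s19 hα (Nat.modEq_zero_iff_dvd.2 (dvd_mul_right m n)),
    pow_pow_eq_of_modEq_s19 hβ (Nat.modEq_zero_iff_dvd.2 (dvd_mul_left n m)), pow_zero, pow_one,
    pow_one]

theorem Function.Periodic.sum_range_add {M : Type*} [AddCommMonoid M] {g : ℕ → M} {N : ℕ}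
    (hg : Function.Periodic g N) (c : ℕ) : ∑ u ∈ range N, g (c + u) = ∑ u ∈ range N, g u := by
  induction c with
  | zero => simp
  | succ c ih =>
    rw [← ih]
    cases N with
    | zero => simp
    | succ N =>
      rw [sum_range_succ, sum_range_succ', add_zero, show c + 1 + N = c + (N + 1) by ring,
        hg c]
      simp only [add_assoc, add_comm 1]

theorem FiniteField.sub_pow_card_pow {F L : Type*} [Field F] [Fintype F] [CommRing L]
    [Algebra F L] (a b : L) (u : ℕ) :
    (a - b) ^ Fintype.card F ^ u = a ^ Fintype.card F ^ u - b ^ Fintype.card F ^ u := by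
  simpa [AlgHom.coe_pow, coe_frobeniusAlgHom, pow_iterate] using
    map_sub (frobeniusAlgHom F L ^ u) a b

theorem FiniteField.sum_range_sub_pow_pow_eq_zero {F L : Type*} [Field F] [Fintype F]
    [CommRing L] [Algebra F L] {N : ℕ} {x : L} (hx : x ^ Fintype.card F ^ N = x) (s t : ℕ) :
    ∑ u ∈ range N, (x ^ Fintype.card F ^ s - x ^ Fintype.card F ^ t) ^ Fintype.card F ^ u = 0 := by
  have hper : Function.Periodic (fun a ↦ x ^ Fintype.card F ^ a) N := fun a ↦ by
    simp only [pow_add, mul_comm, pow_mul, hx]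
  simp only [sub_pow_card_pow, ← pow_mul, ← pow_add, sum_sub_distrib, hper.sum_range_add,
    sub_self]

theorem not_linearIndependent_of_sum_eq_zero {ι R M : Type*} [Fintype ι] [Nonempty ι]
    [Semiring R] [Nontrivial R] [AddCommMonoid M] [Module R M] {v : ι → M}
    (hv : ∑ i, v i = 0) : ¬ LinearIndependent R v :=
  Fintype.not_linearIndependent_iffₛ.2 ⟨1, 0, by simpa using hv, Classical.arbitrary ι,
    one_ne_zero⟩

theorem stmt19_general (F : Type*) [Field F] [Fintype F] (q : ℕ) (hq : q = Fintype.card F)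
    (m n : ℕ) (hm : 1 < m) (hn : 1 < n) (hmn : Nat.Coprime m n) (k ℓ : ℕ)
    (α β : AlgebraicClosure F)
    (hαmem : α ^ q ^ m = α)
    (hβmem : β ^ q ^ n = β) :
    ¬ LinearIndependent F
        fun s : Fin (m * n) => (α ^ q ^ k * β - α * β ^ q ^ ℓ) ^ q ^ (s : ℕ) := by
  subst hq
  have : NeZero (m * n) := ⟨Nat.mul_ne_zero (by omega) (by omega)⟩
  obtain ⟨s, hs⟩ := exists_mul_pow_pow_eq hmn hαmem hβmem k 0
  obtain ⟨t, ht⟩ := exists_mul_pow_pow_eq hmn hαmem hβmem 0 ℓ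
  rw [pow_zero, pow_one] at hs ht
  refine not_linearIndependent_of_sum_eq_zero ?_
  rw [Fin.sum_univ_eq_sum_range (fun u ↦ (α ^ _ ^ k * β - α * β ^ _ ^ ℓ) ^ _ ^ u), ← hs, ← ht]
  exact FiniteField.sum_range_sub_pow_pow_eq_zero (mul_pow_pow_mul_eq_self hαmem hβmem) s t

/-- Proposition 4.8: for normal `α ∈ 𝔽_{q^m}` and `β ∈ 𝔽_{q^n}` with `gcd(m,n)=1` and
`m, n > 1`, the element `α^{q^k}β − αβ^{q^ℓ}` is never normal in `𝔽_{q^{mn}}`. -/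
theorem stmt19 (F : Type*) [Field F] [Fintype F] (q : ℕ) (hq : q = Fintype.card F)
    (m n : ℕ) (hm : 1 < m) (hn : 1 < n) (hmn : Nat.Coprime m n) (k ℓ : ℕ)
    (α β : AlgebraicClosure F)
    (hαmem : α ^ q ^ m = α)
    (hαnormal : LinearIndependent F fun i : Fin m => α ^ q ^ (i : ℕ))
    (hβmem : β ^ q ^ n = β)
    (hβnormal : LinearIndependent F fun j : Fin n => β ^ q ^ (j : ℕ)) :
    ¬ LinearIndependent F
        fun s : Fin (m * n) => (α ^ q ^ k * β - α * β ^ q ^ ℓ) ^ q ^ (s : ℕ) :=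
  stmt19_general F q hq m n hm hn hmn k ℓ α β hαmem hβmem
end
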